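/- arXiv:1406.6652 — 6 statements merged into one kernel-verified Lean document; each statement's English description precedes it below -/
import Mathlib

section
/- For every integer r ≥ 0, every measurable set B ⊆ 𝕏^r and every measurable set A ⊆ 𝕏, the rejected proposals preceding the first accepted sample are independent of the accepted sample: P(T = r+1, (Y_1,…,Y_r) ∈ B, Y_T ∈ A) = P(T = r+1, (Y_1,…,Y_r) ∈ B) · P(Y_T ∈ A). (Proposition 1 of the paper: the number and locations of the rejected proposals preceding an accepted sample are independent of the location of that sample.) -/
open MeasureTheory ProbabilityTheory

/-- Trial `i` of the rejection sampler is accepted: the uniform variable falls below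
`f(Y_i)/(M q(Y_i))`, interpreted as rejection when `q(Y_i) = 0`. -/
def accepts {𝕏 Ω : Type*} (q f : 𝕏 → ℝ) (M : ℝ)
    (Y : ℕ → Ω → 𝕏) (U : ℕ → Ω → ℝ) (i : ℕ) (ω : Ω) : Prop :=
  q (Y i ω) ≠ 0 ∧ U i ω ≤ f (Y i ω) / (M * q (Y i ω))

open Classical in
/-- The first accepted sample `Y_T` of the rejection sampler (an arbitrary value,
namely `Y 0 ω`, on the null event where no trial is ever accepted). -/
noncomputable def firstAccepted {𝕏 Ω : Type*} (q f : 𝕏 → ℝ) (M : ℝ)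
    (Y : ℕ → Ω → 𝕏) (U : ℕ → Ω → ℝ) (ω : Ω) : 𝕏 :=
  if h : ∃ i, accepts q f M Y U i ω then Y (Nat.find h) ω else Y 0 ω

lemma aux_indep_head {Ω β : Type*} [MeasurableSpace Ω] [MeasurableSpace β] {P : Measure Ω}
    {X : ℕ → Ω → β} (hX : ∀ i, Measurable (X i))
    (hindep : iIndepFun X P) (k : ℕ) :
    IndepFun (fun ω (i : Fin k) => X i ω) (X k) P := by
  have h := hindep.indepFun_finset (Finset.range k) {k}
    (by simp [Finset.disjoint_left]; omega) hX
  have h1 : Measurable fun (v : ↥(Finset.range k) → β) (i : Fin k) =>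
      v ⟨i.1, Finset.mem_range.2 i.2⟩ :=
    measurable_pi_lambda _ fun i => measurable_pi_apply _
  have h2 : Measurable fun (v : ↥({k} : Finset ℕ) → β) => v ⟨k, Finset.mem_singleton_self k⟩ :=
    measurable_pi_apply _
  exact h.comp h1 h2


/-- Proposition 1: the rejected proposals preceding the first accepted sample (their
number and locations) are independent of the location of the accepted sample. -/
theorem rejected_proposals_indep_of_accepted
    {𝕏 : Type*} [MeasurableSpace 𝕏] (lam : Measure 𝕏) [SigmaFinite lam]
    (q f : 𝕏 → ℝ) (hqm : Measurable q) (hfm : Measurable f)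
    (hq0 : ∀ x, 0 ≤ q x) (hq1 : ∫ x, q x ∂lam = 1)
    (M : ℝ) (hM : 0 < M)
    (hf0 : ∀ x, 0 ≤ f x) (hfq : ∀ x, f x ≤ M * q x)
    (Z : ℝ) (hZ : Z = ∫ x, f x ∂lam) (hZpos : 0 < Z)
    {Ω : Type*} [MeasurableSpace Ω] (P : Measure Ω) [IsProbabilityMeasure P]
    (Y : ℕ → Ω → 𝕏) (U : ℕ → Ω → ℝ)
    (hY : ∀ i, Measurable (Y i)) (hU : ∀ i, Measurable (U i))
    (hindep : iIndepFun (fun i ω => (Y i ω, U i ω)) P)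
    (hident : ∀ i, IdentDistrib (fun ω => (Y i ω, U i ω)) (fun ω => (Y 0 ω, U 0 ω)) P P)
    (hYlaw : ∀ i, P.map (Y i) = lam.withDensity fun x => ENNReal.ofReal (q x))
    (hUlaw : ∀ i, P.map (U i) = volume.restrict (Set.Icc (0:ℝ) 1))
    (hYU : ∀ i, IndepFun (Y i) (U i) P)
    (r : ℕ) (B : Set (Fin r → 𝕏)) (hB : MeasurableSet B)
    (A : Set 𝕏) (hA : MeasurableSet A) :
    P {ω | (∀ i < r, ¬ accepts q f M Y U i ω) ∧ accepts q f M Y U r ω ∧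
        (fun j : Fin r => Y j ω) ∈ B ∧ firstAccepted q f M Y U ω ∈ A}
      = P {ω | (∀ i < r, ¬ accepts q f M Y U i ω) ∧ accepts q f M Y U r ω ∧
          (fun j : Fin r => Y j ω) ∈ B}
        * P {ω | firstAccepted q f M Y U ω ∈ A} := by
  classical
  set X : ℕ → Ω → 𝕏 × ℝ := fun i ω => (Y i ω, U i ω) with hX_def
  have hXm : ∀ i, Measurable (X i) := fun i => (hY i).prodMk (hU i)
  set G : Set (𝕏 × ℝ) := {p | q p.1 ≠ 0 ∧ p.2 ≤ f p.1 / (M * q p.1)} with hG_def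
  have hG : MeasurableSet G := by
    apply MeasurableSet.inter
    · exact ((hqm.comp measurable_fst) (measurableSet_singleton 0)).compl
    · exact measurableSet_le measurable_snd
        ((hfm.comp measurable_fst).div (measurable_const.mul (hqm.comp measurable_fst)))
  have hacc : ∀ i ω, accepts q f M Y U i ω ↔ X i ω ∈ G := fun i ω => Iff.rfl
  -- the acceptance probability
  set a : ENNReal := P (X 0 ⁻¹' G) with ha_def
  have hXident : ∀ (i : ℕ) (S : Set (𝕏 × ℝ)), MeasurableSet S → P (X i ⁻¹' S) = P (X 0 ⁻¹' S) :=
    fun i S hS => (hident i).measure_mem_eq hS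
  -- value of a
  have hq_int : Integrable q lam := by
    by_contra h
    rw [integral_undef h] at hq1
    norm_num at hq1
  have hf_int : Integrable f lam := by
    refine (hq_int.const_mul M).mono' hfm.aestronglyMeasurable (ae_of_all _ fun x => ?_)
    rw [Real.norm_of_nonneg (hf0 x)]
    exact hfq x
  have ha_val : a = ENNReal.ofReal (Z / M) := by
    have hmap : P.map (X 0) = (P.map (Y 0)).prod (P.map (U 0)) :=
      (indepFun_iff_map_prod_eq_prod_map_map (hY 0).aemeasurable (hU 0).aemeasurable).1 (hYU 0)
    have h1 : a = ((lam.withDensity fun x => ENNReal.ofReal (q x)).prod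
        (volume.restrict (Set.Icc (0:ℝ) 1))) G := by
      rw [ha_def, ← Measure.map_apply (hXm 0) hG, hmap, hYlaw 0, hUlaw 0]
    rw [h1, Measure.prod_apply hG,
      lintegral_withDensity_eq_lintegral_mul _ (hqm.ennreal_ofReal)
        (measurable_measure_prodMk_left hG)]
    have hpt : ∀ x, (fun x => ENNReal.ofReal (q x)) x *
        (fun x => (volume.restrict (Set.Icc (0:ℝ) 1)) (Prod.mk x ⁻¹' G)) x
        = ENNReal.ofReal (f x / M) := by
      intro x
      by_cases hqx : q x = 0
      · have hfx : f x = 0 := le_antisymm (by simpa [hqx] using hfq x) (hf0 x)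
        have : Prod.mk x ⁻¹' G = (∅ : Set ℝ) := by
          ext u; simp [hG_def, hqx]
        simp [this, hfx]
      · have hqpos : 0 < q x := lt_of_le_of_ne (hq0 x) (Ne.symm hqx)
        have hMq : 0 < M * q x := mul_pos hM hqpos
        set t : ℝ := f x / (M * q x) with ht_def
        have ht0 : 0 ≤ t := div_nonneg (hf0 x) hMq.le
        have ht1 : t ≤ 1 := (div_le_one hMq).2 (hfq x)
        have hpre : Prod.mk x ⁻¹' G = Set.Iic t := by
          ext u; simp [hG_def, hqx, ht_def]
        have hvol : (volume.restrict (Set.Icc (0:ℝ) 1)) (Set.Iic t) = ENNReal.ofReal t := by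
          rw [Measure.restrict_apply measurableSet_Iic]
          have : Set.Iic t ∩ Set.Icc (0:ℝ) 1 = Set.Icc 0 t := by
            ext u
            simp only [Set.mem_inter_iff, Set.mem_Iic, Set.mem_Icc]
            constructor
            · rintro ⟨h1, h2, _⟩; exact ⟨h2, h1⟩
            · rintro ⟨h1, h2⟩; exact ⟨h2, h1, h2.trans ht1⟩
          rw [this, Real.volume_Icc, sub_zero]
        simp only [hpre, hvol, ← ENNReal.ofReal_mul (hq0 x)]
        congr 1
        rw [ht_def]
        field_simp
    simp only [Pi.mul_apply]
    rw [lintegral_congr hpt, ← ofReal_integral_eq_lintegral_ofReal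
      (hf_int.div_const M) (ae_of_all _ fun x => div_nonneg (hf0 x) hM.le),
      integral_div, ← hZ]
  have ha_pos : 0 < a := by
    rw [ha_val]; exact ENNReal.ofReal_pos.2 (div_pos hZpos hM)
  have ha_ne_top : a ≠ ⊤ := by rw [ha_val]; exact ENNReal.ofReal_ne_top
  have ha_le : a ≤ 1 := prob_le_one
  -- tuple maps and rejection sets
  set Tup : ∀ k : ℕ, Ω → (Fin k → 𝕏 × ℝ) := fun k ω i => X i ω with hTup_def
  have hTupm : ∀ k, Measurable (Tup k) :=
    fun k => measurable_pi_lambda _ fun i => hXm i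
  set D : ∀ k : ℕ, Set (Fin k → 𝕏 × ℝ) := fun k => {v | ∀ i, v i ∉ G} with hD_def
  have hD : ∀ k, MeasurableSet (D k) := by
    intro k
    have : D k = ⋂ i : Fin k, (fun v : Fin k → 𝕏 × ℝ => v i) ⁻¹' Gᶜ := by
      ext v; simp [hD_def]
    rw [this]
    exact MeasurableSet.iInter fun i => (measurable_pi_apply i) hG.compl
  have hTupD : ∀ k ω, Tup k ω ∈ D k ↔ ∀ i < k, ¬ accepts q f M Y U i ω := by
    intro k ω
    constructor
    · intro h i hi; exact fun hc => h ⟨i, hi⟩ ((hacc i ω).1 hc)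
    · intro h i; exact fun hc => h i.1 i.2 ((hacc i.1 ω).2 hc)
  -- probability of all rejections before k
  have hcompl : ∀ k, P (X k ⁻¹' Gᶜ) = 1 - a := by
    intro k
    rw [Set.preimage_compl, prob_compl_eq_one_sub (hXm k hG), hXident k G hG]
  have hEk : ∀ k, P (Tup k ⁻¹' D k) = (1 - a) ^ k := by
    intro k
    induction k with
    | zero =>
      have : Tup 0 ⁻¹' D 0 = Set.univ := by
        ext ω; simp [hD_def]
      simp [this]
    | succ k ih =>
      have hsplit : Tup (k+1) ⁻¹' D (k+1) = (Tup k ⁻¹' D k) ∩ X k ⁻¹' Gᶜ := by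
        ext ω
        simp only [Set.mem_preimage, Set.mem_inter_iff, hD_def, Set.mem_setOf_eq,
          Set.mem_compl_iff]
        constructor
        · intro h
          exact ⟨fun i => h i.castSucc, h (Fin.last k)⟩
        · rintro ⟨h1, h2⟩ i
          rcases lt_or_eq_of_le (Nat.lt_succ_iff.1 i.2) with hi | hi
          · exact h1 ⟨i.1, hi⟩
          · simpa [hTup_def, hi] using h2
      rw [hsplit, (aux_indep_head hXm hindep k).measure_inter_preimage_eq_mul _ _ (hD k) hG.compl,
        hcompl k, ih, pow_succ]
  -- target sets
  set GA : Set (𝕏 × ℝ) := G ∩ {p | p.1 ∈ A} with hGA_def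
  have hGA : MeasurableSet GA := hG.inter (measurable_fst hA)
  set pA : ENNReal := P (X 0 ⁻¹' GA) with hpA_def
  set D' : Set (Fin r → 𝕏 × ℝ) := D r ∩ {v | (fun i => (v i).1) ∈ B} with hD'_def
  have hD' : MeasurableSet D' :=
    (hD r).inter ((measurable_pi_lambda _ fun i => (measurable_pi_apply i).fst) hB)
  set C : ENNReal := P (Tup r ⁻¹' D') with hC_def
  -- firstAccepted equals Y k on the event of first acceptance at k
  have hfa : ∀ (k : ℕ) (ω : Ω), (∀ i < k, ¬ accepts q f M Y U i ω) →
      accepts q f M Y U k ω → firstAccepted q f M Y U ω = Y k ω := by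
    intro k ω h1 h2
    have hex : ∃ i, accepts q f M Y U i ω := ⟨k, h2⟩
    have hfind : Nat.find hex = k := (Nat.find_eq_iff hex).2 ⟨h2, h1⟩
    rw [firstAccepted, dif_pos hex, hfind]
  -- left-hand side event
  have hLset : {ω | (∀ i < r, ¬ accepts q f M Y U i ω) ∧ accepts q f M Y U r ω ∧
      (fun j : Fin r => Y j ω) ∈ B ∧ firstAccepted q f M Y U ω ∈ A}
      = (Tup r ⁻¹' D') ∩ X r ⁻¹' GA := by
    ext ω
    simp only [Set.mem_setOf_eq, Set.mem_inter_iff, Set.mem_preimage, hD'_def, hGA_def]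
    constructor
    · rintro ⟨h1, h2, h3, h4⟩
      refine ⟨⟨(hTupD r ω).2 h1, h3⟩, (hacc r ω).1 h2, ?_⟩
      show Y r ω ∈ A
      rwa [← hfa r ω h1 h2]
    · rintro ⟨⟨hd, hb⟩, hg, hAA⟩
      have h1 := (hTupD r ω).1 hd
      have h2 := (hacc r ω).2 hg
      exact ⟨h1, h2, hb, by rwa [hfa r ω h1 h2]⟩
  have hMset : {ω | (∀ i < r, ¬ accepts q f M Y U i ω) ∧ accepts q f M Y U r ω ∧
      (fun j : Fin r => Y j ω) ∈ B} = (Tup r ⁻¹' D') ∩ X r ⁻¹' G := by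
    ext ω
    simp only [Set.mem_setOf_eq, Set.mem_inter_iff, Set.mem_preimage, hD'_def]
    constructor
    · rintro ⟨h1, h2, h3⟩
      exact ⟨⟨(hTupD r ω).2 h1, h3⟩, (hacc r ω).1 h2⟩
    · rintro ⟨⟨hd, hb⟩, hg⟩
      exact ⟨(hTupD r ω).1 hd, (hacc r ω).2 hg, hb⟩
  have hLval : P ((Tup r ⁻¹' D') ∩ X r ⁻¹' GA) = C * pA := by
    rw [(aux_indep_head hXm hindep r).measure_inter_preimage_eq_mul _ _ hD' hGA,
      hXident r GA hGA]
  have hMval : P ((Tup r ⁻¹' D') ∩ X r ⁻¹' G) = C * a := by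
    rw [(aux_indep_head hXm hindep r).measure_inter_preimage_eq_mul _ _ hD' hG,
      hXident r G hG]
  -- the accepted-sample event
  set W : ℕ → Set Ω := fun k => Tup k ⁻¹' D k ∩ X k ⁻¹' GA with hW_def
  set N : Set Ω := (⋂ i, X i ⁻¹' Gᶜ) ∩ Y 0 ⁻¹' A with hN_def
  have hFset : {ω | firstAccepted q f M Y U ω ∈ A} = (⋃ k, W k) ∪ N := by
    ext ω
    simp only [Set.mem_setOf_eq, Set.mem_union, Set.mem_iUnion, hW_def, hN_def,
      Set.mem_inter_iff, Set.mem_preimage, Set.mem_iInter, Set.mem_compl_iff]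
    by_cases hex : ∃ i, accepts q f M Y U i ω
    · have hspec := Nat.find_spec hex
      have hmin : ∀ i < Nat.find hex, ¬ accepts q f M Y U i ω := fun i hi => Nat.find_min hex hi
      have hfae : firstAccepted q f M Y U ω = Y (Nat.find hex) ω := hfa _ ω hmin hspec
      constructor
      · intro hmem
        left
        exact ⟨Nat.find hex, (hTupD _ ω).2 hmin, (hacc _ ω).1 hspec, show Y (Nat.find hex) ω ∈ A from hfae ▸ hmem⟩
      · rintro (⟨k, hd, hg, hAA⟩ | ⟨hall, _⟩)
        · have h1 := (hTupD k ω).1 hd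
          have h2 := (hacc k ω).2 hg
          rw [hfa k ω h1 h2]; exact hAA
        · exact absurd ((hacc _ ω).1 hspec) (hall _)
    · have hfae : firstAccepted q f M Y U ω = Y 0 ω := by
        rw [firstAccepted, dif_neg hex]
      constructor
      · intro hmem
        right
        exact ⟨fun i hg => hex ⟨i, (hacc i ω).2 hg⟩, by rwa [← hfae]⟩
      · rintro (⟨k, _, hg, _⟩ | ⟨_, hAA⟩)
        · exact absurd ⟨k, (hacc k ω).2 hg⟩ hex
        · rwa [hfae]
  have hN0 : P N = 0 := by
    have hle : ∀ k, P N ≤ (1 - a) ^ k := by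
      intro k
      rw [← hEk k]
      refine measure_mono fun ω hω => ?_
      rcases hω with ⟨hall, _⟩
      simp only [Set.mem_iInter, Set.mem_preimage, Set.mem_compl_iff] at hall
      exact fun i => hall i.1
    have hlt1 : (1 : ENNReal) - a < 1 :=
      ENNReal.sub_lt_self ENNReal.one_ne_top one_ne_zero ha_pos.ne'
    have htend := ENNReal.tendsto_pow_atTop_nhds_zero_of_lt_one hlt1
    exact le_antisymm (ge_of_tendsto' htend hle) zero_le
  have hkey : ∀ j k, j < k → Disjoint (W j) (W k) := by
    intro j k hlt
    rw [Set.disjoint_left]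
    rintro ω ⟨_, hgj⟩ ⟨hdk, _⟩
    simp only [Set.mem_preimage, hGA_def, Set.mem_inter_iff] at hgj
    exact ((hTupD k ω).1 hdk) j hlt ((hacc j ω).2 hgj.1)
  have hWdisj : Pairwise (Function.onFun Disjoint W) := by
    intro j k hjk
    rcases lt_or_gt_of_ne hjk with h | h
    · exact hkey j k h
    · exact (hkey k j h).symm
  have hWm : ∀ k, MeasurableSet (W k) := fun k => ((hTupm k) (hD k)).inter ((hXm k) hGA)
  have hWval : ∀ k, P (W k) = (1 - a) ^ k * pA := by
    intro k
    rw [hW_def]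
    simp only
    rw [(aux_indep_head hXm hindep k).measure_inter_preimage_eq_mul _ _ (hD k) hGA,
      hXident k GA hGA, hEk k]
  have hFval : P {ω | firstAccepted q f M Y U ω ∈ A} = a⁻¹ * pA := by
    rw [hFset]
    have hPU : P ((⋃ k, W k) ∪ N) = P (⋃ k, W k) := by
      refine le_antisymm ?_ (measure_mono Set.subset_union_left)
      calc P ((⋃ k, W k) ∪ N) ≤ P (⋃ k, W k) + P N := measure_union_le _ _
        _ = P (⋃ k, W k) := by rw [hN0, add_zero]
    rw [hPU, measure_iUnion hWdisj hWm]
    simp_rw [hWval]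
    rw [ENNReal.tsum_mul_right, ENNReal.tsum_geometric,
      ENNReal.sub_sub_cancel ENNReal.one_ne_top ha_le]
  rw [hLset, hLval, hMset, hMval, hFval]
  rw [mul_assoc C a _, ← mul_assoc a a⁻¹ pA, ENNReal.mul_inv_cancel ha_pos.ne' ha_ne_top,
    one_mul]
end

section
/- The first accepted sample of the rejection sampler has the target distribution: T < ∞ almost surely, and for every measurable set A ⊆ 𝕏, P(Y_T ∈ A) = (1/Z) ∫_A f dλ. -/
open MeasureTheory ProbabilityTheory

/-- The product measure of the acceptance region over a measurable set. -/
lemma prodMeasS {𝕏 : Type*} [MeasurableSpace 𝕏] (lam : Measure 𝕏) [SigmaFinite lam]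
    (q f : 𝕏 → ℝ) (hqm : Measurable q) (hfm : Measurable f)
    (hq0 : ∀ x, 0 ≤ q x) (M : ℝ) (hM : 0 < M)
    (hf0 : ∀ x, 0 ≤ f x) (hfq : ∀ x, f x ≤ M * q x)
    (hf_int : Integrable f lam)
    (B : Set 𝕏) (hB : MeasurableSet B) :
    ((lam.withDensity fun x => ENNReal.ofReal (q x)).prod
        (volume.restrict (Set.Icc (0:ℝ) 1)))
      ({p : 𝕏 × ℝ | q p.1 ≠ 0 ∧ p.2 ≤ f p.1 / (M * q p.1)} ∩ B ×ˢ Set.univ)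
      = ENNReal.ofReal ((1 / M) * ∫ x in B, f x ∂lam) := by
  have hSmeas : MeasurableSet {p : 𝕏 × ℝ | q p.1 ≠ 0 ∧ p.2 ≤ f p.1 / (M * q p.1)} := by
    refine MeasurableSet.inter ?_ ?_
    · exact (hqm.comp measurable_fst) (measurableSet_singleton 0).compl
    · exact measurableSet_le measurable_snd
        ((hfm.div (measurable_const.mul hqm)).comp measurable_fst)
  have hfz : ∀ x, q x = 0 → f x = 0 := by
    intro x hx
    have := hfq x
    rw [hx, mul_zero] at this
    exact le_antisymm this (hf0 x)
  rw [Measure.prod_apply (hSmeas.inter (hB.prod MeasurableSet.univ))]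
  have hslice : ∀ x, (volume.restrict (Set.Icc (0:ℝ) 1))
      (Prod.mk x ⁻¹' ({p : 𝕏 × ℝ | q p.1 ≠ 0 ∧ p.2 ≤ f p.1 / (M * q p.1)} ∩ B ×ˢ Set.univ))
      = B.indicator (fun x => ENNReal.ofReal (f x / (M * q x))) x := by
    intro x
    by_cases hxB : x ∈ B
    · by_cases hqx : q x = 0
      · have : Prod.mk x ⁻¹' ({p : 𝕏 × ℝ | q p.1 ≠ 0 ∧ p.2 ≤ f p.1 / (M * q p.1)}
            ∩ B ×ˢ Set.univ) = ∅ := by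
          ext u; simp [hqx]
        rw [this]
        simp [Set.indicator_of_mem hxB, hfz x hqx]
      · have hq_pos : 0 < q x := lt_of_le_of_ne (hq0 x) (Ne.symm hqx)
        have hMq : 0 < M * q x := mul_pos hM hq_pos
        have hc0 : 0 ≤ f x / (M * q x) := div_nonneg (hf0 x) hMq.le
        have hc1 : f x / (M * q x) ≤ 1 := (div_le_one hMq).mpr (hfq x)
        have hset : Prod.mk x ⁻¹' ({p : 𝕏 × ℝ | q p.1 ≠ 0 ∧ p.2 ≤ f p.1 / (M * q p.1)}
            ∩ B ×ˢ Set.univ) = Set.Iic (f x / (M * q x)) := by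
          ext u; simp [hqx, hxB]
        rw [hset, Measure.restrict_apply measurableSet_Iic]
        have : Set.Iic (f x / (M * q x)) ∩ Set.Icc (0:ℝ) 1
            = Set.Icc (0:ℝ) (f x / (M * q x)) := by
          ext u
          simp only [Set.mem_inter_iff, Set.mem_Iic, Set.mem_Icc]
          constructor
          · rintro ⟨h1, h2, _⟩; exact ⟨h2, h1⟩
          · rintro ⟨h1, h2⟩; exact ⟨h2, h1, h2.trans hc1⟩
        rw [this, Real.volume_Icc, Set.indicator_of_mem hxB]
        norm_num
    · have : Prod.mk x ⁻¹' ({p : 𝕏 × ℝ | q p.1 ≠ 0 ∧ p.2 ≤ f p.1 / (M * q p.1)}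
          ∩ B ×ˢ Set.univ) = ∅ := by
        ext u; simp [hxB]
      rw [this]
      simp [Set.indicator_of_notMem hxB]
  calc ∫⁻ x, (volume.restrict (Set.Icc (0:ℝ) 1))
        (Prod.mk x ⁻¹' ({p : 𝕏 × ℝ | q p.1 ≠ 0 ∧ p.2 ≤ f p.1 / (M * q p.1)} ∩ B ×ˢ Set.univ))
        ∂(lam.withDensity fun x => ENNReal.ofReal (q x))
      = ∫⁻ x, B.indicator (fun x => ENNReal.ofReal (f x / (M * q x))) x
          ∂(lam.withDensity fun x => ENNReal.ofReal (q x)) := by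
        exact lintegral_congr hslice
    _ = ∫⁻ x in B, ENNReal.ofReal (f x / (M * q x))
          ∂(lam.withDensity fun x => ENNReal.ofReal (q x)) := by
        rw [lintegral_indicator hB]
    _ = ∫⁻ x in B, ENNReal.ofReal (q x) * ENNReal.ofReal (f x / (M * q x)) ∂lam := by
        rw [restrict_withDensity hB,
          lintegral_withDensity_eq_lintegral_mul _ (g := fun x => ENNReal.ofReal (f x / (M * q x)))
            (hqm.ennreal_ofReal)
            ((hfm.div (measurable_const.mul hqm)).ennreal_ofReal :
              Measurable fun x => ENNReal.ofReal (f x / (M * q x)))]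
        rfl
    _ = ∫⁻ x in B, ENNReal.ofReal (f x / M) ∂lam := by
        refine lintegral_congr fun x => ?_
        rw [← ENNReal.ofReal_mul (hq0 x)]
        congr 1
        by_cases hqx : q x = 0
        · simp [hqx, hfz x hqx]
        · field_simp
    _ = ENNReal.ofReal (∫ x in B, f x / M ∂lam) := by
        rw [ofReal_integral_eq_lintegral_ofReal ((hf_int.restrict).div_const M)
          (ae_of_all _ fun x => div_nonneg (hf0 x) hM.le)]
    _ = ENNReal.ofReal ((1 / M) * ∫ x in B, f x ∂lam) := by
        rw [integral_div]
        congr 1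
        ring

/-- The first accepted sample of the rejection sampler has the target distribution:
`T < ∞` almost surely, and `P(Y_T ∈ A) = (1/Z) ∫_A f dλ` for every measurable `A`. -/
theorem rejection_sampler_correct
    {𝕏 : Type*} [MeasurableSpace 𝕏] (lam : Measure 𝕏) [SigmaFinite lam]
    (q f : 𝕏 → ℝ) (hqm : Measurable q) (hfm : Measurable f)
    (hq0 : ∀ x, 0 ≤ q x) (hq1 : ∫ x, q x ∂lam = 1)
    (M : ℝ) (hM : 0 < M)
    (hf0 : ∀ x, 0 ≤ f x) (hfq : ∀ x, f x ≤ M * q x)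
    (Z : ℝ) (hZ : Z = ∫ x, f x ∂lam) (hZpos : 0 < Z)
    {Ω : Type*} [MeasurableSpace Ω] (P : Measure Ω) [IsProbabilityMeasure P]
    (Y : ℕ → Ω → 𝕏) (U : ℕ → Ω → ℝ)
    (hY : ∀ i, Measurable (Y i)) (hU : ∀ i, Measurable (U i))
    (hindep : iIndepFun (fun i ω => (Y i ω, U i ω)) P)
    (hident : ∀ i, IdentDistrib (fun ω => (Y i ω, U i ω)) (fun ω => (Y 0 ω, U 0 ω)) P P)
    (hYlaw : ∀ i, P.map (Y i) = lam.withDensity fun x => ENNReal.ofReal (q x))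
    (hUlaw : ∀ i, P.map (U i) = volume.restrict (Set.Icc (0:ℝ) 1))
    (hYU : ∀ i, IndepFun (Y i) (U i) P) :
    (∀ᵐ ω ∂P, ∃ i, accepts q f M Y U i ω) ∧
      ∀ A : Set 𝕏, MeasurableSet A →
        P {ω | firstAccepted q f M Y U ω ∈ A}
          = ENNReal.ofReal ((1 / Z) * ∫ x in A, f x ∂lam) := by
  classical
  -- basic integrability facts
  have hq_int : Integrable q lam := by
    by_contra h
    rw [integral_undef h] at hq1
    exact one_ne_zero hq1.symm
  have hf_int : Integrable f lam := by
    refine Integrable.mono' (hq_int.const_mul M) hfm.aestronglyMeasurable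
      (ae_of_all _ fun x => ?_)
    rw [Real.norm_eq_abs, abs_of_nonneg (hf0 x)]
    exact hfq x
  have hZM : Z ≤ M := by
    rw [hZ]
    calc ∫ x, f x ∂lam ≤ ∫ x, M * q x ∂lam :=
          integral_mono hf_int (hq_int.const_mul M) hfq
      _ = M * ∫ x, q x ∂lam := by rw [integral_const_mul]
      _ = M := by rw [hq1, mul_one]
  -- the acceptance region
  set S : Set (𝕏 × ℝ) := {p : 𝕏 × ℝ | q p.1 ≠ 0 ∧ p.2 ≤ f p.1 / (M * q p.1)} with hS_def
  have hSmeas : MeasurableSet S := by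
    refine MeasurableSet.inter ?_ ?_
    · exact (hqm.comp measurable_fst) (measurableSet_singleton 0).compl
    · exact measurableSet_le measurable_snd
        ((hfm.div (measurable_const.mul hqm)).comp measurable_fst)
  set X : ℕ → Ω → 𝕏 × ℝ := fun i ω => (Y i ω, U i ω) with hX_def
  have hXmeas : ∀ i, Measurable (X i) := fun i => (hY i).prodMk (hU i)
  have hXlaw : ∀ i, P.map (X i)
      = (lam.withDensity fun x => ENNReal.ofReal (q x)).prod
          (volume.restrict (Set.Icc (0:ℝ) 1)) := by
    intro i
    rw [(indepFun_iff_map_prod_eq_prod_map_map (hY i).aemeasurable (hU i).aemeasurable).mp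
      (hYU i), hYlaw i, hUlaw i]
  -- key computation
  have hkey : ∀ (i : ℕ) (B : Set 𝕏), MeasurableSet B →
      P (X i ⁻¹' (S ∩ B ×ˢ Set.univ))
        = ENNReal.ofReal ((1 / M) * ∫ x in B, f x ∂lam) := by
    intro i B hB
    rw [← Measure.map_apply (hXmeas i) (hSmeas.inter (hB.prod MeasurableSet.univ)), hXlaw i]
    exact prodMeasS lam q f hqm hfm hq0 M hM hf0 hfq hf_int B hB
  set p : ENNReal := ENNReal.ofReal (Z / M) with hp_def
  have hpS : ∀ i, P (X i ⁻¹' S) = p := by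
    intro i
    have h := hkey i Set.univ MeasurableSet.univ
    rw [Set.univ_prod_univ, Set.inter_univ] at h
    rw [setIntegral_univ] at h
    rw [h, hp_def, hZ]
    congr 1
    ring
  have hpScompl : ∀ i, P (X i ⁻¹' Sᶜ) = 1 - p := by
    intro i
    rw [Set.preimage_compl, measure_compl (hXmeas i hSmeas) (measure_ne_top P _), hpS i,
      measure_univ]
  have hp_le_one : p ≤ 1 := ENNReal.ofReal_le_one.mpr ((div_le_one hM).mpr hZM)
  have hp_pos : p ≠ 0 := by
    simp only [hp_def, ne_eq, ENNReal.ofReal_eq_zero, not_le]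
    exact div_pos hZpos hM
  -- independence product formula
  have hprod := (iIndepFun_iff_measure_inter_preimage_eq_mul.mp hindep)
  -- the event of n initial rejections
  set R : ℕ → Set Ω := fun n => ⋂ i ∈ Finset.range n, X i ⁻¹' Sᶜ with hR_def
  have hRmeas : ∀ n, MeasurableSet (R n) := fun n =>
    MeasurableSet.biInter (Finset.range n).countable_toSet
      (fun i _ => hXmeas i hSmeas.compl)
  have hRmeasure : ∀ n, P (R n) = (1 - p) ^ n := by
    intro n
    rw [hR_def]
    rw [hprod (Finset.range n) (sets := fun _ => Sᶜ) (fun i _ => hSmeas.compl),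
      Finset.prod_congr rfl (fun i _ => hpScompl i), Finset.prod_const, Finset.card_range]
  -- accepts ↔ membership in preimage of S
  have hacc : ∀ i ω, accepts q f M Y U i ω ↔ ω ∈ X i ⁻¹' S := fun i ω => Iff.rfl
  -- the event of never accepting is null
  have hNnull : P {ω | ¬ ∃ i, accepts q f M Y U i ω} = 0 := by
    have hsub : ∀ n, {ω | ¬ ∃ i, accepts q f M Y U i ω} ⊆ R n := by
      intro n ω hω
      simp only [Set.mem_setOf_eq, not_exists] at hω
      refine Set.mem_biInter fun i _ => ?_
      intro hi
      exact hω i ((hacc i ω).mpr hi)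
    have hle : ∀ n, P {ω | ¬ ∃ i, accepts q f M Y U i ω} ≤ (1 - p) ^ n := by
      intro n
      rw [← hRmeasure n]
      exact measure_mono (hsub n)
    have hlt1 : (1 : ENNReal) - p < 1 :=
      ENNReal.sub_lt_self ENNReal.one_ne_top one_ne_zero hp_pos
    have htend := ENNReal.tendsto_pow_atTop_nhds_zero_of_lt_one hlt1
    exact le_antisymm (ge_of_tendsto' htend hle) zero_le
  have hae : ∀ᵐ ω ∂P, ∃ i, accepts q f M Y U i ω := by
    rw [ae_iff]
    exact hNnull
  refine ⟨hae, fun A hA => ?_⟩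
  -- events where the first acceptance occurs at time n with Y n ∈ A
  set W : ℕ → Set Ω := fun n => R n ∩ X n ⁻¹' (S ∩ A ×ˢ Set.univ) with hW_def
  have hWmeas : ∀ n, MeasurableSet (W n) := fun n =>
    (hRmeas n).inter (hXmeas n (hSmeas.inter (hA.prod MeasurableSet.univ)))
  have hWmeasure : ∀ n, P (W n)
      = ENNReal.ofReal ((1 / M) * ∫ x in A, f x ∂lam) * (1 - p) ^ n := by
    intro n
    have hWeq : W n = ⋂ i ∈ Finset.range (n + 1),
        X i ⁻¹' (if i = n then S ∩ A ×ˢ Set.univ else Sᶜ) := by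
      show R n ∩ X n ⁻¹' (S ∩ A ×ˢ Set.univ) = _
      rw [Finset.range_add_one]
      rw [Finset.set_biInter_insert]
      rw [if_pos rfl]
      rw [Set.inter_comm (R n), hR_def]
      congr 1
      refine Set.iInter₂_congr fun i hi => ?_
      rw [if_neg (ne_of_mem_of_not_mem hi (Finset.notMem_range_self))]
    rw [hWeq, hprod (Finset.range (n + 1))
      (sets := fun i => if i = n then S ∩ A ×ˢ Set.univ else Sᶜ)
      (fun i _ => by
        by_cases hin : i = n
        · simp only [if_pos hin]
          exact hSmeas.inter (hA.prod MeasurableSet.univ)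
        · simp only [if_neg hin]
          exact hSmeas.compl)]
    rw [Finset.range_add_one, Finset.prod_insert Finset.notMem_range_self]
    rw [if_pos rfl]
    rw [hkey n A hA]
    congr 1
    rw [Finset.prod_congr rfl (fun i hi => by
      rw [if_neg (ne_of_mem_of_not_mem hi Finset.notMem_range_self)])]
    rw [Finset.prod_congr rfl (fun i _ => hpScompl i), Finset.prod_const, Finset.card_range]
  -- decomposition of the target event
  have hGeq : {ω | firstAccepted q f M Y U ω ∈ A}
      = ({ω | ¬ ∃ i, accepts q f M Y U i ω} ∩ Y 0 ⁻¹' A) ∪ ⋃ n, W n := by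
    ext ω
    constructor
    · intro hω
      by_cases h : ∃ i, accepts q f M Y U i ω
      · right
        refine Set.mem_iUnion.mpr ⟨Nat.find h, ?_⟩
        have hfa : firstAccepted q f M Y U ω = Y (Nat.find h) ω := by
          rw [firstAccepted, dif_pos h]
        constructor
        · refine Set.mem_biInter fun i hi => ?_
          intro hiS
          exact Nat.find_min h (Finset.mem_range.mp hi) ((hacc i ω).mpr hiS)
        · refine ⟨(hacc _ ω).mp (Nat.find_spec h), ?_, trivial⟩
          show Y (Nat.find h) ω ∈ A
          rw [← hfa]
          exact hω
      · left
        refine ⟨h, ?_⟩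
        have : firstAccepted q f M Y U ω = Y 0 ω := by
          rw [firstAccepted, dif_neg h]
        rw [Set.mem_preimage, ← this]
        exact hω
    · intro hω
      rcases hω with ⟨h1, h2⟩ | hω
      · have : firstAccepted q f M Y U ω = Y 0 ω := by
          rw [firstAccepted, dif_neg h1]
        simpa [Set.mem_setOf_eq, this] using h2
      · obtain ⟨n, hRn, hXn⟩ := Set.mem_iUnion.mp hω
        obtain ⟨hSn, hAn, -⟩ := hXn
        have h : ∃ i, accepts q f M Y U i ω := ⟨n, (hacc n ω).mp hSn⟩
        have hfind : Nat.find h = n := by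
          rw [Nat.find_eq_iff]
          refine ⟨(hacc n ω).mp hSn, fun m hm hmacc => ?_⟩
          have hmem : ω ∈ X m ⁻¹' Sᶜ :=
            Set.mem_iInter₂.mp hRn m (Finset.mem_range.mpr hm)
          exact hmem ((hacc m ω).mp hmacc)
        have : firstAccepted q f M Y U ω = Y n ω := by
          rw [firstAccepted, dif_pos h, hfind]
        simpa [Set.mem_setOf_eq, this] using hAn
  -- disjointness of the W n
  have hdis : ∀ m n, m < n → Disjoint (W m) (W n) := by
    intro m n hmn
    rw [Set.disjoint_left]
    intro ω hWm hWn
    have h1 : X m ω ∈ S := hWm.2.1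
    have h2 : ω ∈ X m ⁻¹' Sᶜ :=
      Set.mem_iInter₂.mp hWn.1 m (Finset.mem_range.mpr hmn)
    exact h2 h1
  have hdisW : Pairwise (Function.onFun Disjoint W) := by
    intro m n hmn
    rcases lt_or_gt_of_ne hmn with h | h
    · exact hdis m n h
    · exact (hdis n m h).symm
  -- compute the measure
  have hIA : 0 ≤ ∫ x in A, f x ∂lam := setIntegral_nonneg hA fun x _ => hf0 x
  rw [hGeq]
  have hnull : P ({ω | ¬ ∃ i, accepts q f M Y U i ω} ∩ Y 0 ⁻¹' A) = 0 :=
    measure_mono_null Set.inter_subset_left hNnull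
  have hUnion : P (({ω | ¬ ∃ i, accepts q f M Y U i ω} ∩ Y 0 ⁻¹' A) ∪ ⋃ n, W n)
      = P (⋃ n, W n) := by
    refine le_antisymm ?_ (measure_mono Set.subset_union_right)
    calc P (({ω | ¬ ∃ i, accepts q f M Y U i ω} ∩ Y 0 ⁻¹' A) ∪ ⋃ n, W n)
        ≤ P ({ω | ¬ ∃ i, accepts q f M Y U i ω} ∩ Y 0 ⁻¹' A) + P (⋃ n, W n) :=
          measure_union_le _ _
      _ = P (⋃ n, W n) := by rw [hnull, zero_add]
  rw [hUnion, measure_iUnion hdisW hWmeas]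
  have hsum : ∑' n, P (W n)
      = ENNReal.ofReal ((1 / M) * ∫ x in A, f x ∂lam) * p⁻¹ := by
    calc ∑' n, P (W n)
        = ∑' n, ENNReal.ofReal ((1 / M) * ∫ x in A, f x ∂lam) * (1 - p) ^ n := by
          exact tsum_congr hWmeasure
      _ = ENNReal.ofReal ((1 / M) * ∫ x in A, f x ∂lam) * ∑' n, (1 - p) ^ n :=
          ENNReal.tsum_mul_left
      _ = ENNReal.ofReal ((1 / M) * ∫ x in A, f x ∂lam) * (1 - (1 - p))⁻¹ := by
          rw [ENNReal.tsum_geometric]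
      _ = ENNReal.ofReal ((1 / M) * ∫ x in A, f x ∂lam) * p⁻¹ := by
          rw [ENNReal.sub_sub_cancel ENNReal.one_ne_top hp_le_one]
  rw [hsum, hp_def, ← ENNReal.ofReal_inv_of_pos (div_pos hZpos hM),
    ← ENNReal.ofReal_mul (by positivity)]
  congr 1
  field_simp
end

section
/- The marginal acceptance probability of a single trial of the rejection sampler equals the ratio of normalizing constants: P(U_1 ≤ f(Y_1)/(M q(Y_1))) = Z/M, i.e., the area under f divided by the area under M·q. -/
open MeasureTheory ProbabilityTheory

/-- The marginal acceptance probability of a single trial equals `Z/M`. -/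
theorem rejection_sampler_acceptance_probability
    {𝕏 : Type*} [MeasurableSpace 𝕏] (lam : Measure 𝕏) [SigmaFinite lam]
    (q f : 𝕏 → ℝ) (hqm : Measurable q) (hfm : Measurable f)
    (hq0 : ∀ x, 0 ≤ q x) (hq1 : ∫ x, q x ∂lam = 1)
    (M : ℝ) (hM : 0 < M)
    (hf0 : ∀ x, 0 ≤ f x) (hfq : ∀ x, f x ≤ M * q x)
    (Z : ℝ) (hZ : Z = ∫ x, f x ∂lam) (hZpos : 0 < Z)
    {Ω : Type*} [MeasurableSpace Ω] (P : Measure Ω) [IsProbabilityMeasure P]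
    (Y : ℕ → Ω → 𝕏) (U : ℕ → Ω → ℝ)
    (hY : ∀ i, Measurable (Y i)) (hU : ∀ i, Measurable (U i))
    (hindep : iIndepFun (fun i ω => (Y i ω, U i ω)) P)
    (hident : ∀ i, IdentDistrib (fun ω => (Y i ω, U i ω)) (fun ω => (Y 0 ω, U 0 ω)) P P)
    (hYlaw : ∀ i, P.map (Y i) = lam.withDensity fun x => ENNReal.ofReal (q x))
    (hUlaw : ∀ i, P.map (U i) = volume.restrict (Set.Icc (0:ℝ) 1))
    (hYU : ∀ i, IndepFun (Y i) (U i) P) :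
    P {ω | accepts q f M Y U 0 ω} = ENNReal.ofReal (Z / M) := by
  classical
  -- integrability facts
  have hq_int : Integrable q lam := by
    by_contra h
    rw [integral_undef h] at hq1; norm_num at hq1
  have hf_int : Integrable f lam := by
    refine (hq_int.const_mul M).mono' hfm.aestronglyMeasurable ?_
    filter_upwards with x
    rw [Real.norm_eq_abs, abs_of_nonneg (hf0 x)]
    exact hfq x
  -- the acceptance set in the product space
  set S : Set (𝕏 × ℝ) := {p | q p.1 ≠ 0 ∧ p.2 ≤ f p.1 / (M * q p.1)} with hSdef
  have hg : Measurable fun x => f x / (M * q x) := hfm.div (measurable_const.mul hqm)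
  have hS : MeasurableSet S := by
    apply MeasurableSet.inter
    · exact (hqm.comp measurable_fst) (measurableSet_singleton 0) |>.compl
    · exact measurableSet_le measurable_snd (hg.comp measurable_fst)
  have hpre : {ω | accepts q f M Y U 0 ω} = (fun ω => (Y 0 ω, U 0 ω)) ⁻¹' S := rfl
  have hmap : P.map (fun ω => (Y 0 ω, U 0 ω)) = (P.map (Y 0)).prod (P.map (U 0)) :=
    (indepFun_iff_map_prod_eq_prod_map_map (hY 0).aemeasurable (hU 0).aemeasurable).mp (hYU 0)
  have h1 : P {ω | accepts q f M Y U 0 ω}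
      = ((lam.withDensity fun x => ENNReal.ofReal (q x)).prod
          (volume.restrict (Set.Icc (0:ℝ) 1))) S := by
    rw [hpre, ← Measure.map_apply ((hY 0).prodMk (hU 0)) hS, hmap, hYlaw 0, hUlaw 0]
  rw [h1, Measure.prod_apply hS]
  -- compute inner slice measure
  have hslice : ∀ x : 𝕏,
      (volume.restrict (Set.Icc (0:ℝ) 1)) (Prod.mk x ⁻¹' S)
        = ENNReal.ofReal (f x / (M * q x)) := by
    intro x
    by_cases hx : q x = 0
    · have hfx : f x = 0 := le_antisymm (by simpa [hx] using hfq x) (hf0 x)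
      have : Prod.mk x ⁻¹' S = (∅ : Set ℝ) := by
        ext u; simp [hSdef, hx]
      rw [this]
      simp [hfx]
    · have hqx : 0 < q x := lt_of_le_of_ne (hq0 x) (Ne.symm hx)
      have hMq : 0 < M * q x := mul_pos hM hqx
      set t := f x / (M * q x) with ht
      have ht0 : 0 ≤ t := div_nonneg (hf0 x) hMq.le
      have ht1 : t ≤ 1 := (div_le_one hMq).mpr (hfq x)
      have hpreimage : Prod.mk x ⁻¹' S = Set.Iic t := by
        ext u; simp [hSdef, hx, ht]
      rw [hpreimage, Measure.restrict_apply measurableSet_Iic]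
      have : Set.Iic t ∩ Set.Icc (0:ℝ) 1 = Set.Icc 0 t := by
        ext u
        constructor
        · rintro ⟨h1, h2, h3⟩; exact ⟨h2, h1⟩
        · rintro ⟨h1, h2⟩; exact ⟨h2, h1, h2.trans ht1⟩
      rw [this, Real.volume_Icc, sub_zero]
  simp_rw [hslice]
  -- integrate over the withDensity measure
  rw [lintegral_withDensity_eq_lintegral_mul _ hqm.ennreal_ofReal
    hg.ennreal_ofReal]
  have hpt : ∀ x, ((fun x => ENNReal.ofReal (q x)) * fun x => ENNReal.ofReal (f x / (M * q x))) x
      = ENNReal.ofReal (f x / M) := by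
    intro x
    by_cases hx : q x = 0
    · have hfx : f x = 0 := le_antisymm (by simpa [hx] using hfq x) (hf0 x)
      simp [hx, hfx]
    · have hqx : 0 < q x := lt_of_le_of_ne (hq0 x) (Ne.symm hx)
      simp only [Pi.mul_apply]
      rw [← ENNReal.ofReal_mul (hq0 x)]
      congr 1
      field_simp
  simp_rw [hpt]
  have hdiv : ∀ x, ENNReal.ofReal (f x / M) = ENNReal.ofReal (f x) * ENNReal.ofReal M⁻¹ := by
    intro x
    rw [div_eq_mul_inv, ENNReal.ofReal_mul (hf0 x)]
  simp_rw [hdiv]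
  rw [lintegral_mul_const _ hfm.ennreal_ofReal,
    ← ofReal_integral_eq_lintegral_ofReal hf_int (Filter.Eventually.of_forall hf0),
    ← hZ, ← ENNReal.ofReal_mul hZpos.le, div_eq_mul_inv]
end

section
/- Joint density of the rejected proposals and the accepted sample (equation (1) of the paper): for every integer r ≥ 0 and every measurable set C ⊆ 𝕏^{r+1}, P(T = r+1, (Y_1,…,Y_r,Y_{r+1}) ∈ C) = ∫_C (f(x)/M) ∏_{i=1}^r (q(y_i) − f(y_i)/M) dλ^{⊗(r+1)}(y_1,…,y_r,x). -/
open MeasureTheory ProbabilityTheory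

section Aux
open ENNReal


theorem lintegral_fin_pi_prod {n : ℕ} {X : Type*} [MeasurableSpace X]
    (μ : Fin n → Measure X) [∀ i, SigmaFinite (μ i)]
    (g : Fin n → X → ℝ≥0∞) (hg : ∀ i, Measurable (g i)) :
    ∫⁻ x, ∏ i, g i (x i) ∂Measure.pi μ = ∏ i, ∫⁻ x, g i x ∂μ i := by
  induction n with
  | zero => simp
  | succ n ih =>
    have hmeas : Measurable fun x : Fin (n+1) → X => ∏ i, g i (x i) :=
      Finset.measurable_prod _ fun i _ => (hg i).comp (measurable_pi_apply i)
    rw [← ((measurePreserving_piFinSuccAbove μ 0).symm (MeasurableEquiv.piFinSuccAbove (fun _ => X) 0)).lintegral_comp hmeas]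
    simp_rw [MeasurableEquiv.piFinSuccAbove_symm_apply, Fin.insertNthEquiv, Equiv.coe_fn_mk,
      Fin.insertNth_zero, Fin.prod_univ_succ, Fin.cons_zero, Fin.cons_succ, Fin.zero_succAbove, cast_eq]
    rw [lintegral_prod_mul (f := g 0) (g := fun y : Fin n → X => ∏ x : Fin n, g x.succ (y x))
      ((hg 0).aemeasurable)
      ((Finset.measurable_prod _ fun (j : Fin n) _ =>
        (hg j.succ).comp (measurable_pi_apply j)).aemeasurable)]
    rw [ih _ _ fun j => hg j.succ]

variable {X : Type*} [MeasurableSpace X] (lam : Measure X) [SigmaFinite lam]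
  (q f : X → ℝ) (M : ℝ)

theorem measurableSet_accSet (hqm : Measurable q) (hfm : Measurable f) :
    MeasurableSet {p : X × ℝ | q p.1 ≠ 0 ∧ p.2 ≤ f p.1 / (M * q p.1)} := by
  have : {p : X × ℝ | q p.1 ≠ 0 ∧ p.2 ≤ f p.1 / (M * q p.1)} =
      {p : X × ℝ | q p.1 ≠ 0} ∩ {p : X × ℝ | p.2 ≤ f p.1 / (M * q p.1)} := rfl
  rw [this]
  exact (((hqm.comp measurable_fst) (measurableSet_singleton 0)).compl).inter
    (measurableSet_le measurable_snd
      ((hfm.comp measurable_fst).div ((measurable_const.mul (hqm.comp measurable_fst)))))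

theorem prod_acc_apply (hqm : Measurable q) (hfm : Measurable f)
    (hq0 : ∀ x, 0 ≤ q x) (hM : 0 < M) (hf0 : ∀ x, 0 ≤ f x) (hfq : ∀ x, f x ≤ M * q x)
    (B : Set X) (hB : MeasurableSet B) :
    ((lam.withDensity fun x => ENNReal.ofReal (q x)).prod
      (volume.restrict (Set.Icc (0:ℝ) 1)))
      ({p : X × ℝ | q p.1 ≠ 0 ∧ p.2 ≤ f p.1 / (M * q p.1)} ∩ B ×ˢ Set.univ)
      = ∫⁻ x in B, ENNReal.ofReal (f x / M) ∂lam := by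
  set S := {p : X × ℝ | q p.1 ≠ 0 ∧ p.2 ≤ f p.1 / (M * q p.1)} with hSdef
  have hS : MeasurableSet S := measurableSet_accSet q f M hqm hfm
  set τ := volume.restrict (Set.Icc (0:ℝ) 1) with hτdef
  rw [Measure.prod_apply (hS.inter (hB.prod MeasurableSet.univ))]
  set h : X → ℝ≥0∞ := fun x =>
    B.indicator (fun x => if q x = 0 then 0 else ENNReal.ofReal (f x / (M * q x))) x with hhdef
  have hslice : ∀ x, τ (Prod.mk x ⁻¹' (S ∩ B ×ˢ Set.univ)) = h x := by
    intro x
    by_cases hxB : x ∈ B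
    · by_cases hqx : q x = 0
      · have : Prod.mk x ⁻¹' (S ∩ B ×ˢ Set.univ) = (∅ : Set ℝ) := by
          ext u; simp [S, hqx]
        simp [this, h, hxB, hqx]
      · have hMq : 0 < M * q x := mul_pos hM (lt_of_le_of_ne (hq0 x) (Ne.symm hqx))
        have ha0 : 0 ≤ f x / (M * q x) := div_nonneg (hf0 x) hMq.le
        have ha1 : f x / (M * q x) ≤ 1 := (div_le_one hMq).mpr (hfq x)
        have hpre : Prod.mk x ⁻¹' (S ∩ B ×ˢ Set.univ) = Set.Iic (f x / (M * q x)) := by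
          ext u; simp [S, hqx, hxB]
        rw [hpre, hτdef, Measure.restrict_apply measurableSet_Iic]
        have : Set.Iic (f x / (M * q x)) ∩ Set.Icc (0:ℝ) 1 = Set.Icc 0 (f x / (M * q x)) := by
          ext u
          constructor
          · rintro ⟨h1, h2, _⟩; exact ⟨h2, h1⟩
          · rintro ⟨h1, h2⟩; exact ⟨h2, h1, h2.trans ha1⟩
        rw [this, Real.volume_Icc]
        simp [h, hxB, hqx]
    · have : Prod.mk x ⁻¹' (S ∩ B ×ˢ Set.univ) = (∅ : Set ℝ) := by
        ext u; simp [hxB]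
      simp [this, h, hxB]
  rw [lintegral_congr hslice]
  have hhm : Measurable h := by
    apply Measurable.indicator _ hB
    exact Measurable.ite (hqm (measurableSet_singleton 0)) measurable_const
      ((hfm.div (measurable_const.mul hqm)).ennreal_ofReal)
  rw [lintegral_withDensity_eq_lintegral_mul lam hqm.ennreal_ofReal hhm]
  have : ∀ x, (ENNReal.ofReal (q x) * h x) = B.indicator (fun x => ENNReal.ofReal (f x / M)) x := by
    intro x
    by_cases hxB : x ∈ B
    · by_cases hqx : q x = 0
      · have hfx : f x = 0 := le_antisymm (by simpa [hqx] using hfq x) (hf0 x)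
        simp [h, hxB, hqx, hfx]
      · have hMne : M ≠ 0 := ne_of_gt hM
        have : q x * (f x / (M * q x)) = f x / M := by field_simp
        simp only [h, Set.indicator_of_mem hxB, if_neg hqx]
        rw [← ENNReal.ofReal_mul (hq0 x), this]
    · simp [h, hxB]
  simp only [Pi.mul_apply]
  rw [lintegral_congr this, lintegral_indicator hB]

theorem prod_rej_apply (hqm : Measurable q) (hfm : Measurable f)
    (hq0 : ∀ x, 0 ≤ q x) (hM : 0 < M) (hf0 : ∀ x, 0 ≤ f x) (hfq : ∀ x, f x ≤ M * q x)
    (B : Set X) (hB : MeasurableSet B) :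
    ((lam.withDensity fun x => ENNReal.ofReal (q x)).prod
      (volume.restrict (Set.Icc (0:ℝ) 1)))
      ({p : X × ℝ | q p.1 ≠ 0 ∧ p.2 ≤ f p.1 / (M * q p.1)}ᶜ ∩ B ×ˢ Set.univ)
      = ∫⁻ x in B, ENNReal.ofReal (q x - f x / M) ∂lam := by
  set S := {p : X × ℝ | q p.1 ≠ 0 ∧ p.2 ≤ f p.1 / (M * q p.1)}ᶜ with hSdef
  have hS : MeasurableSet S := (measurableSet_accSet q f M hqm hfm).compl
  set τ := volume.restrict (Set.Icc (0:ℝ) 1) with hτdef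
  rw [Measure.prod_apply (hS.inter (hB.prod MeasurableSet.univ))]
  set h : X → ℝ≥0∞ := fun x =>
    B.indicator (fun x => if q x = 0 then 1 else ENNReal.ofReal (1 - f x / (M * q x))) x with hhdef
  have hslice : ∀ x, τ (Prod.mk x ⁻¹' (S ∩ B ×ˢ Set.univ)) = h x := by
    intro x
    by_cases hxB : x ∈ B
    · by_cases hqx : q x = 0
      · have : Prod.mk x ⁻¹' (S ∩ B ×ˢ Set.univ) = (Set.univ : Set ℝ) := by
          ext u; simp [S, hqx, hxB]
        rw [this, hτdef]
        simp [Measure.restrict_apply, Real.volume_Icc, h, hxB, hqx]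
      · have hMq : 0 < M * q x := mul_pos hM (lt_of_le_of_ne (hq0 x) (Ne.symm hqx))
        have ha0 : 0 ≤ f x / (M * q x) := div_nonneg (hf0 x) hMq.le
        have ha1 : f x / (M * q x) ≤ 1 := (div_le_one hMq).mpr (hfq x)
        have hpre : Prod.mk x ⁻¹' (S ∩ B ×ˢ Set.univ) = Set.Ioi (f x / (M * q x)) := by
          ext u; simp [S, hqx, hxB, not_le]
        rw [hpre, hτdef, Measure.restrict_apply measurableSet_Ioi]
        have : Set.Ioi (f x / (M * q x)) ∩ Set.Icc (0:ℝ) 1 = Set.Ioc (f x / (M * q x)) 1 := by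
          ext u
          constructor
          · rintro ⟨h1, _, h3⟩; exact ⟨h1, h3⟩
          · rintro ⟨h1, h2⟩; exact ⟨h1, ha0.trans h1.le, h2⟩
        rw [this, Real.volume_Ioc]
        simp [h, hxB, hqx]
    · have : Prod.mk x ⁻¹' (S ∩ B ×ˢ Set.univ) = (∅ : Set ℝ) := by
        ext u; simp [hxB]
      simp [this, h, hxB]
  rw [lintegral_congr hslice]
  have hhm : Measurable h := by
    apply Measurable.indicator _ hB
    exact Measurable.ite (hqm (measurableSet_singleton 0)) measurable_const
      ((measurable_const.sub (hfm.div (measurable_const.mul hqm))).ennreal_ofReal)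
  rw [lintegral_withDensity_eq_lintegral_mul lam hqm.ennreal_ofReal hhm]
  have : ∀ x, (ENNReal.ofReal (q x) * h x)
      = B.indicator (fun x => ENNReal.ofReal (q x - f x / M)) x := by
    intro x
    by_cases hxB : x ∈ B
    · by_cases hqx : q x = 0
      · have hfx : f x = 0 := le_antisymm (by simpa [hqx] using hfq x) (hf0 x)
        simp [h, hxB, hqx, hfx]
      · have hMne : M ≠ 0 := ne_of_gt hM
        have : q x * (1 - f x / (M * q x)) = q x - f x / M := by field_simp
        simp only [h, Set.indicator_of_mem hxB, if_neg hqx]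
        rw [← ENNReal.ofReal_mul (hq0 x), this]
    · simp [h, hxB]
  simp only [Pi.mul_apply]
  rw [lintegral_congr this, lintegral_indicator hB]


end Aux

/-- Equation (1) of the paper: the joint density of the rejected proposals and the
accepted sample with respect to `λ^⊗(r+1)` is `(f(x)/M) ∏_i (q(y_i) − f(y_i)/M)`. -/
theorem rejection_sampler_joint_density
    {𝕏 : Type*} [MeasurableSpace 𝕏] (lam : Measure 𝕏) [SigmaFinite lam]
    (q f : 𝕏 → ℝ) (hqm : Measurable q) (hfm : Measurable f)
    (hq0 : ∀ x, 0 ≤ q x) (hq1 : ∫ x, q x ∂lam = 1)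
    (M : ℝ) (hM : 0 < M)
    (hf0 : ∀ x, 0 ≤ f x) (hfq : ∀ x, f x ≤ M * q x)
    (Z : ℝ) (hZ : Z = ∫ x, f x ∂lam) (hZpos : 0 < Z)
    {Ω : Type*} [MeasurableSpace Ω] (P : Measure Ω) [IsProbabilityMeasure P]
    (Y : ℕ → Ω → 𝕏) (U : ℕ → Ω → ℝ)
    (hY : ∀ i, Measurable (Y i)) (hU : ∀ i, Measurable (U i))
    (hindep : iIndepFun (fun i ω => (Y i ω, U i ω)) P)
    (hident : ∀ i, IdentDistrib (fun ω => (Y i ω, U i ω)) (fun ω => (Y 0 ω, U 0 ω)) P P)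
    (hYlaw : ∀ i, P.map (Y i) = lam.withDensity fun x => ENNReal.ofReal (q x))
    (hUlaw : ∀ i, P.map (U i) = volume.restrict (Set.Icc (0:ℝ) 1))
    (hYU : ∀ i, IndepFun (Y i) (U i) P)
    (r : ℕ) (C : Set (Fin (r + 1) → 𝕏)) (hC : MeasurableSet C) :
    P {ω | (∀ i < r, ¬ accepts q f M Y U i ω) ∧ accepts q f M Y U r ω ∧
        (fun j : Fin (r + 1) => Y j ω) ∈ C}
      = ENNReal.ofReal (∫ y in C,
          (f (y (Fin.last r)) / M) *
            ∏ i : Fin r, (q (y i.castSucc) - f (y i.castSucc) / M)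
          ∂(Measure.pi fun _ : Fin (r + 1) => lam)) := by
  -- notation
  set ρ : Measure 𝕏 := lam.withDensity fun x => ENNReal.ofReal (q x) with hρdef
  set τ : Measure ℝ := volume.restrict (Set.Icc (0:ℝ) 1) with hτdef
  set SAcc : Set (𝕏 × ℝ) := {p : 𝕏 × ℝ | q p.1 ≠ 0 ∧ p.2 ≤ f p.1 / (M * q p.1)} with hSAccdef
  have hSAccm : MeasurableSet SAcc := measurableSet_accSet q f M hqm hfm
  set W : ℕ → Ω → 𝕏 × ℝ := fun i ω => (Y i ω, U i ω) with hWdef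
  have hWm : ∀ i, Measurable (W i) := fun i => (hY i).prodMk (hU i)
  have hpair : ∀ i, P.map (W i) = ρ.prod τ := by
    intro i
    rw [← hYlaw i, ← hUlaw i]
    exact ((indepFun_iff_map_prod_eq_prod_map_map (hY i).aemeasurable
      (hU i).aemeasurable).mp (hYU i))
  -- densities
  set g : Fin (r + 1) → 𝕏 → ℝ :=
    fun j x => if (j : ℕ) < r then q x - f x / M else f x / M with hgdef
  have hg0 : ∀ j x, 0 ≤ g j x := by
    intro j x
    have h1 : f x / M ≤ q x := (div_le_iff₀ hM).mpr (by linarith [hfq x, mul_comm M (q x)])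
    have h2 : 0 ≤ f x / M := div_nonneg (hf0 x) hM.le
    by_cases h : (j : ℕ) < r <;> simp [g, h] <;> linarith
  have hgq : ∀ j x, g j x ≤ q x := by
    intro j x
    have h1 : f x / M ≤ q x := (div_le_iff₀ hM).mpr (by linarith [hfq x, mul_comm M (q x)])
    have h2 : 0 ≤ f x / M := div_nonneg (hf0 x) hM.le
    by_cases h : (j : ℕ) < r <;> simp [g, h] <;> linarith
  have hgm : ∀ j, Measurable (g j) := by
    intro j
    by_cases h : (j : ℕ) < r <;> simp only [g, h, if_true, if_false]
    · exact hqm.sub (hfm.div_const M)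
    · exact hfm.div_const M
  set ν : Fin (r + 1) → Measure 𝕏 :=
    fun j => lam.withDensity fun x => ENNReal.ofReal (g j x) with hνdef
  have hq_lint : ∫⁻ x, ENNReal.ofReal (q x) ∂lam = 1 := by
    have h0 := congrArg (fun m : Measure 𝕏 => m Set.univ) (hYlaw 0)
    simp only [Measure.map_apply (hY 0) MeasurableSet.univ, Set.preimage_univ,
      measure_univ] at h0
    rw [withDensity_apply _ MeasurableSet.univ, Measure.restrict_univ] at h0
    exact h0.symm
  have hν_le_one : ∀ j, ∫⁻ x, ENNReal.ofReal (g j x) ∂lam ≤ 1 := by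
    intro j
    calc ∫⁻ x, ENNReal.ofReal (g j x) ∂lam
        ≤ ∫⁻ x, ENNReal.ofReal (q x) ∂lam :=
          lintegral_mono fun x => ENNReal.ofReal_le_ofReal (hgq j x)
      _ = 1 := hq_lint
  haveI hν_fin : ∀ j, IsFiniteMeasure (ν j) := by
    intro j
    constructor
    rw [hνdef, withDensity_apply _ MeasurableSet.univ, Measure.restrict_univ]
    exact lt_of_le_of_lt (hν_le_one j) ENNReal.one_lt_top
  haveI hν_sf : ∀ j, SigmaFinite (ν j) := fun j => inferInstance
  set G : Ω → Fin (r + 1) → 𝕏 := fun ω j => Y (j : ℕ) ω with hGdef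
  have hGm : Measurable G := measurable_pi_lambda _ fun j => hY (j : ℕ)
  set E : Set Ω := {ω | (∀ i < r, ¬ accepts q f M Y U i ω) ∧ accepts q f M Y U r ω} with hEdef
  -- key identity
  have key : Measure.pi ν = (P.restrict E).map G := by
    refine Measure.pi_eq fun s hs => ?_
    have hsm : MeasurableSet (Set.univ.pi s) := MeasurableSet.univ_pi hs
    rw [Measure.map_apply hGm hsm, Measure.restrict_apply (hGm hsm)]
    set T : Fin (r + 1) → Set (𝕏 × ℝ) :=
      fun j => (if (j : ℕ) < r then SAccᶜ else SAcc) ∩ s j ×ˢ Set.univ with hTdef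
    have hTm : ∀ j, MeasurableSet (T j) := by
      intro j
      by_cases h : (j : ℕ) < r <;> simp only [T, h, if_true, if_false]
      · exact hSAccm.compl.inter ((hs j).prod MeasurableSet.univ)
      · exact hSAccm.inter ((hs j).prod MeasurableSet.univ)
    set A : Fin (r + 1) → Set Ω := fun j => W (j : ℕ) ⁻¹' T j with hAdef
    have hseteq : G ⁻¹' Set.univ.pi s ∩ E = ⋂ j, A j := by
      ext ω
      simp only [Set.mem_inter_iff, Set.mem_preimage, Set.mem_pi, Set.mem_univ, true_implies,
        Set.mem_iInter, E, Set.mem_setOf_eq, A, T, Set.mem_prod]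
      constructor
      · rintro ⟨hGs, hrej, haccep⟩ j
        refine ⟨?_, hGs j, trivial⟩
        by_cases h : (j : ℕ) < r
        · rw [if_pos h]; exact hrej _ h
        · rw [if_neg h]
          have hjr : (j : ℕ) = r := by have := j.isLt; omega
          rw [hjr]; exact haccep
      · intro hA
        refine ⟨fun j => (hA j).2.1, fun i hi => ?_, ?_⟩
        · have := (hA ⟨i, by omega⟩).1
          rw [if_pos hi] at this
          exact this
        · have := (hA (Fin.last r)).1
          have hlt : ¬ ((Fin.last r : ℕ) < r) := by simp
          rw [if_neg hlt] at this
          exact this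
    rw [hseteq]
    classical
    set s' : ℕ → Set Ω := fun i => if h : i < r + 1 then A ⟨i, h⟩ else Set.univ with hs'def
    have hiInter : (⋂ j, A j) = ⋂ i ∈ Finset.range (r + 1), s' i := by
      ext ω
      simp only [Set.mem_iInter, Finset.mem_range]
      constructor
      · intro hA i hi
        simp only [s', dif_pos hi]
        exact hA _
      · intro h j
        have := h (j : ℕ) j.isLt
        simp only [s', dif_pos j.isLt] at this
        exact this
    have hmeas' : ∀ i ∈ Finset.range (r + 1),
        MeasurableSet[MeasurableSpace.comap (W i) inferInstance] (s' i) := by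
      intro i hi
      rw [Finset.mem_range] at hi
      simp only [s', dif_pos hi]
      exact ⟨T ⟨i, hi⟩, hTm _, rfl⟩
    rw [hiInter, hindep.meas_biInter hmeas',
      ← Fin.prod_univ_eq_prod_range (fun i => P (s' i)) (r + 1)]
    refine Finset.prod_congr rfl fun j _ => ?_
    have hs'j : s' (j : ℕ) = A j := by simp only [s', dif_pos j.isLt]
    have hPA : P (s' (j : ℕ)) = (ρ.prod τ) (T j) := by
      rw [hs'j, hAdef, ← Measure.map_apply (hWm _) (hTm j), hpair]
    rw [hPA, hνdef, withDensity_apply _ (hs j)]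
    by_cases h : (j : ℕ) < r
    · simp only [T, g, h, if_true]
      exact prod_rej_apply lam q f M hqm hfm hq0 hM hf0 hfq (s j) (hs j)
    · simp only [T, g, h, if_false]
      exact prod_acc_apply lam q f M hqm hfm hq0 hM hf0 hfq (s j) (hs j)
  -- withDensity identity
  have hpiwd : Measure.pi ν =
      (Measure.pi fun _ : Fin (r + 1) => lam).withDensity
        (fun y => ∏ j, ENNReal.ofReal (g j (y j))) := by
    refine Measure.pi_eq fun s hs => ?_
    rw [withDensity_apply _ (MeasurableSet.univ_pi hs),
      ← lintegral_indicator (MeasurableSet.univ_pi hs)]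
    have hind : ∀ y : Fin (r + 1) → 𝕏, (Set.univ.pi s).indicator
        (fun y => ∏ j, ENNReal.ofReal (g j (y j))) y
        = ∏ j, ((s j).indicator fun x => ENNReal.ofReal (g j x)) (y j) := by
      intro y
      by_cases hy : y ∈ Set.univ.pi s
      · rw [Set.indicator_of_mem hy]
        refine Finset.prod_congr rfl fun j _ => ?_
        rw [Set.indicator_of_mem (hy j (Set.mem_univ j))]
      · rw [Set.indicator_of_notMem hy]
        rw [Set.mem_univ_pi] at hy
        push_neg at hy
        obtain ⟨j, hj⟩ := hy
        exact (Finset.prod_eq_zero (Finset.mem_univ j)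
          (by rw [Set.indicator_of_notMem hj])).symm
    rw [lintegral_congr hind,
      lintegral_fin_pi_prod (fun _ => lam) _
        (fun j => ((hgm j).ennreal_ofReal).indicator (hs j))]
    refine Finset.prod_congr rfl fun j _ => ?_
    rw [lintegral_indicator (hs j), hνdef, withDensity_apply _ (hs j)]
  -- assemble
  have hfMq : ∀ x, f x / M ≤ q x := fun x =>
    (div_le_iff₀ hM).mpr (by linarith [hfq x, mul_comm M (q x)])
  set dens : (Fin (r + 1) → 𝕏) → ℝ := fun y =>
    (f (y (Fin.last r)) / M) *
      ∏ i : Fin r, (q (y i.castSucc) - f (y i.castSucc) / M) with hdensdef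
  have hdens_eq : ∀ y, (∏ j, ENNReal.ofReal (g j (y j))) = ENNReal.ofReal (dens y) := by
    intro y
    rw [← ENNReal.ofReal_prod_of_nonneg (fun j _ => hg0 j (y j))]
    congr 1
    rw [Fin.prod_univ_castSucc]
    have hlast : g (Fin.last r) (y (Fin.last r)) = f (y (Fin.last r)) / M := by
      simp [g]
    have hcast : ∀ i : Fin r, g i.castSucc (y i.castSucc)
        = q (y i.castSucc) - f (y i.castSucc) / M := by
      intro i
      simp [g, i.isLt]
    rw [hlast, Finset.prod_congr rfl fun i _ => hcast i, hdensdef]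
    ring
  have hdens_nn : ∀ y, 0 ≤ dens y := fun y =>
    mul_nonneg (div_nonneg (hf0 _) hM.le)
      (Finset.prod_nonneg fun i _ => sub_nonneg.mpr (hfMq _))
  have hdens_meas : Measurable dens :=
    ((hfm.comp (measurable_pi_apply (Fin.last r))).div_const M).mul
      (Finset.measurable_prod _ fun i _ =>
        ((hqm.comp (measurable_pi_apply i.castSucc)).sub
          ((hfm.comp (measurable_pi_apply i.castSucc)).div_const M)))
  have hset : {ω | (∀ i < r, ¬ accepts q f M Y U i ω) ∧ accepts q f M Y U r ω ∧
      (fun j : Fin (r + 1) => Y j ω) ∈ C} = G ⁻¹' C ∩ E := by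
    ext ω
    simp only [Set.mem_setOf_eq, Set.mem_inter_iff, Set.mem_preimage, E, G]
    tauto
  have hint : Integrable dens ((Measure.pi fun _ : Fin (r + 1) => lam).restrict C) := by
    refine ⟨hdens_meas.aestronglyMeasurable, ?_⟩
    rw [hasFiniteIntegral_iff_norm]
    calc ∫⁻ y in C, ENNReal.ofReal ‖dens y‖ ∂(Measure.pi fun _ : Fin (r + 1) => lam)
        = ∫⁻ y in C, ENNReal.ofReal (dens y) ∂(Measure.pi fun _ : Fin (r + 1) => lam) := by
          refine lintegral_congr fun y => ?_
          rw [Real.norm_of_nonneg (hdens_nn y)]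
      _ ≤ ∫⁻ y, ENNReal.ofReal (dens y) ∂(Measure.pi fun _ : Fin (r + 1) => lam) :=
          setLIntegral_le_lintegral _ _
      _ = ∫⁻ y, ∏ j, ENNReal.ofReal (g j (y j)) ∂(Measure.pi fun _ : Fin (r + 1) => lam) :=
          (lintegral_congr fun y => hdens_eq y).symm
      _ = ∏ j, ∫⁻ x, ENNReal.ofReal (g j x) ∂lam :=
          lintegral_fin_pi_prod _ _ fun j => (hgm j).ennreal_ofReal
      _ ≤ 1 := Finset.prod_le_one (fun j _ => zero_le) (fun j _ => hν_le_one j)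
      _ < ⊤ := ENNReal.one_lt_top
  rw [hset, ← Measure.restrict_apply (hGm hC), ← Measure.map_apply hGm hC, ← key, hpiwd,
    withDensity_apply _ hC, lintegral_congr (fun y => hdens_eq y),
    ← ofReal_integral_eq_lintegral_ofReal hint (Filter.Eventually.of_forall fun y => hdens_nn y)]
end

section
/- Law of the rejected proposals: for every integer r ≥ 0 and every measurable set B ⊆ 𝕏^r, P(T = r+1, (Y_1,…,Y_r) ∈ B) = (Z/M) ∫_B ∏_{i=1}^r (q(y_i) − f(y_i)/M) dλ^{⊗r}(y_1,…,y_r). (Combined with the joint density formula, this shows that the conditional distribution of the rejected proposals given the accepted sample Y_T = x does not depend on x.) -/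
open MeasureTheory ProbabilityTheory

open Set in

lemma lintegral_pi_prod {𝕏 : Type*} [MeasurableSpace 𝕏] (m : Measure 𝕏) [SigmaFinite m] :
    ∀ (n : ℕ) (h : Fin n → 𝕏 → ENNReal), (∀ i, Measurable (h i)) →
      ∫⁻ y, ∏ i, h i (y i) ∂(Measure.pi fun _ : Fin n => m) = ∏ i, ∫⁻ x, h i x ∂m := by
  intro n
  induction n with
  | zero =>
    intro h hh
    simp only [Finset.univ_eq_empty, Finset.prod_empty, lintegral_const, one_mul,
      Measure.pi_univ]
  | succ n ih =>
    intro h hh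
    set e := MeasurableEquiv.piFinSuccAbove (fun _ : Fin (n+1) => 𝕏) 0 with he
    have hmp := measurePreserving_piFinSuccAbove (fun _ : Fin (n+1) => m) 0
    have hF : Measurable (fun y : Fin (n+1) → 𝕏 => ∏ i, h i (y i)) :=
      Finset.measurable_prod _ fun i _ => (hh i).comp (measurable_pi_apply i)
    have key : ∫⁻ p : 𝕏 × (Fin n → 𝕏), ∏ i, h i (e.symm p i)
            ∂(m.prod (Measure.pi fun _ : Fin n => m))
        = ∫⁻ y, ∏ i, h i (y i) ∂(Measure.pi fun _ : Fin (n+1) => m) :=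
      (hmp.symm e).lintegral_comp hF
    rw [← key]
    have hpt : ∀ p : 𝕏 × (Fin n → 𝕏), ∏ i, h i (e.symm p i)
        = h 0 p.1 * ∏ i : Fin n, h i.succ (p.2 i) := by
      rintro ⟨x, w⟩
      have : e.symm (x, w) = Fin.insertNth 0 x w := rfl
      rw [this, Fin.insertNth_zero', Fin.prod_univ_succ]
      simp [Fin.cons_zero, Fin.cons_succ]
    simp_rw [hpt]
    have hg : Measurable (fun w : Fin n → 𝕏 => ∏ i : Fin n, h i.succ (w i)) :=
      Finset.measurable_prod _ fun i _ => (hh i.succ).comp (measurable_pi_apply i)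
    have hfb : ∫⁻ p : 𝕏 × (Fin n → 𝕏), h 0 p.1 * (∏ i : Fin n, h i.succ (p.2 i))
          ∂(m.prod (Measure.pi fun _ : Fin n => m))
        = (∫⁻ x, h 0 x ∂m) * ∫⁻ w, ∏ i : Fin n, h i.succ (w i)
            ∂(Measure.pi fun _ : Fin n => m) :=
      lintegral_prod_mul (hh 0).aemeasurable hg.aemeasurable
    rw [hfb, ih _ (fun i => hh i.succ), Fin.prod_univ_succ]

lemma pi_withDensity_const {𝕏 : Type*} [MeasurableSpace 𝕏] (m : Measure 𝕏) [SigmaFinite m]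
    (n : ℕ) (g : 𝕏 → ENNReal) (hg : Measurable g) [SigmaFinite (m.withDensity g)] :
    Measure.pi (fun _ : Fin n => m.withDensity g)
      = (Measure.pi fun _ : Fin n => m).withDensity (fun y => ∏ i, g (y i)) := by
  refine Measure.pi_eq fun t ht => ?_
  have hbox : MeasurableSet (Set.pi Set.univ t) := MeasurableSet.univ_pi ht
  rw [withDensity_apply _ hbox, ← lintegral_indicator hbox (fun y => ∏ i, g (y i))]
  have hpt : ∀ y : Fin n → 𝕏,
      (Set.pi Set.univ t).indicator (fun y => ∏ i, g (y i)) y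
        = ∏ i, (t i).indicator g (y i) := by
    intro y
    by_cases hy : y ∈ Set.pi Set.univ t
    · rw [Set.indicator_of_mem hy]
      exact Finset.prod_congr rfl fun i _ =>
        (Set.indicator_of_mem (hy i (Set.mem_univ i)) g).symm
    · rw [Set.indicator_of_notMem hy]
      rw [Set.mem_univ_pi] at hy
      push_neg at hy
      obtain ⟨i, hi⟩ := hy
      exact (Finset.prod_eq_zero (Finset.mem_univ i)
        (Set.indicator_of_notMem hi g)).symm
  simp_rw [hpt]
  rw [lintegral_pi_prod m n _ (fun i => hg.indicator (ht i))]
  exact Finset.prod_congr rfl fun i _ => by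
    rw [lintegral_indicator (ht i), withDensity_apply _ (ht i)]

lemma joint_law_pi {Ω α : Type*} [MeasurableSpace Ω] [MeasurableSpace α]
    (P : Measure Ω) [IsProbabilityMeasure P]
    (X : ℕ → Ω → α) (hX : ∀ i, Measurable (X i))
    (hindep : iIndepFun X P)
    (hident : ∀ i, IdentDistrib (X i) (X 0) P P) (n : ℕ) :
    P.map (fun ω (i : Fin n) => X i ω)
      = Measure.pi (fun _ : Fin n => P.map (X 0)) := by
  have : IsProbabilityMeasure (P.map (X 0)) :=
    Measure.isProbabilityMeasure_map (hX 0).aemeasurable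
  have hV : Measurable (fun ω (i : Fin n) => X i ω) :=
    measurable_pi_lambda _ fun i => hX i
  refine (Measure.pi_eq fun t ht => ?_).symm
  classical
  set s : ℕ → Set α := fun j => if h : j < n then t ⟨j, h⟩ else Set.univ with hs
  have hsm : ∀ j, j ∈ Finset.range n → MeasurableSet (s j) := by
    intro j _
    by_cases h : j < n
    · simpa [hs, h] using ht ⟨j, h⟩
    · simp [hs, h]
  have hpre : (fun ω (i : Fin n) => X i ω) ⁻¹' (Set.pi Set.univ t)
      = ⋂ j ∈ Finset.range n, X j ⁻¹' s j := by
    ext ω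
    simp only [Set.mem_preimage, Set.mem_univ_pi, Set.mem_iInter, Finset.mem_range,
      Set.mem_preimage]
    constructor
    · intro h j hj
      simpa [hs, hj] using h ⟨j, hj⟩
    · intro h i
      have := h i i.isLt
      simpa [hs, i.isLt] using this
  rw [Measure.map_apply hV (MeasurableSet.univ_pi ht), hpre,
    hindep.measure_inter_preimage_eq_mul (Finset.range n) hsm]
  rw [← Fin.prod_univ_eq_prod_range (fun j => P (X j ⁻¹' s j)) n]
  refine Finset.prod_congr rfl fun i _ => ?_
  have hsi : s (i : ℕ) = t i := by simp [hs, i.isLt]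
  rw [hsi, ← Measure.map_apply (hX i) (ht i), (hident (i : ℕ)).map_eq]

section SingleTrial

variable {𝕏 : Type*} [MeasurableSpace 𝕏] {lam : Measure 𝕏} [SigmaFinite lam]
  {q f : 𝕏 → ℝ} {M : ℝ}

/-- The acceptance region in `𝕏 × ℝ`. -/
def accSet (q f : 𝕏 → ℝ) (M : ℝ) : Set (𝕏 × ℝ) :=
  {p | q p.1 ≠ 0 ∧ p.2 ≤ f p.1 / (M * q p.1)}

lemma measurableSet_accSet_s6 (hqm : Measurable q) (hfm : Measurable f) :
    MeasurableSet (accSet q f M) := by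
  have h1 : MeasurableSet {p : 𝕏 × ℝ | q p.1 ≠ 0} :=
    ((hqm.comp measurable_fst) (measurableSet_singleton 0)).compl
  have h2 : MeasurableSet {p : 𝕏 × ℝ | p.2 ≤ f p.1 / (M * q p.1)} :=
    measurableSet_le measurable_snd
      ((hfm.div (measurable_const.mul hqm)).comp measurable_fst)
  exact h1.inter h2

lemma slice_acc (hq0 : ∀ x, 0 ≤ q x) (hM : 0 < M) (hf0 : ∀ x, 0 ≤ f x)
    (hfq : ∀ x, f x ≤ M * q x) (x : 𝕏) :
    (volume.restrict (Set.Icc (0:ℝ) 1)) (Prod.mk x ⁻¹' accSet q f M)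
      = ENNReal.ofReal (f x / (M * q x)) := by
  by_cases hqx : q x = 0
  · have : Prod.mk x ⁻¹' accSet q f M = ∅ := by
      ext u; simp [accSet, hqx]
    simp [this, hqx]
  · have hqpos : 0 < q x := lt_of_le_of_ne (hq0 x) (Ne.symm hqx)
    have hc0 : 0 ≤ f x / (M * q x) :=
      div_nonneg (hf0 x) (by positivity)
    have hc1 : f x / (M * q x) ≤ 1 :=
      (div_le_one (by positivity)).mpr (hfq x)
    have hset : Prod.mk x ⁻¹' accSet q f M = Set.Iic (f x / (M * q x)) := by
      ext u; simp [accSet, hqx]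
    rw [hset, Measure.restrict_apply measurableSet_Iic]
    have : Set.Iic (f x / (M * q x)) ∩ Set.Icc (0:ℝ) 1
        = Set.Icc 0 (f x / (M * q x)) := by
      ext u
      simp only [Set.mem_inter_iff, Set.mem_Iic, Set.mem_Icc]
      exact ⟨fun ⟨h1, h2, _⟩ => ⟨h2, h1⟩, fun ⟨h1, h2⟩ => ⟨h2, h1, h2.trans hc1⟩⟩
    rw [this, Real.volume_Icc, sub_zero]

lemma slice_rej (hq0 : ∀ x, 0 ≤ q x) (hM : 0 < M) (hf0 : ∀ x, 0 ≤ f x)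
    (hfq : ∀ x, f x ≤ M * q x) (x : 𝕏) :
    (volume.restrict (Set.Icc (0:ℝ) 1)) (Prod.mk x ⁻¹' (accSet q f M)ᶜ)
      = ENNReal.ofReal (1 - f x / (M * q x)) := by
  by_cases hqx : q x = 0
  · have : Prod.mk x ⁻¹' (accSet q f M)ᶜ = Set.univ := by
      ext u; simp [accSet, hqx]
    rw [this]
    simp [hqx, Real.volume_Icc]
  · have hqpos : 0 < q x := lt_of_le_of_ne (hq0 x) (Ne.symm hqx)
    have hc0 : 0 ≤ f x / (M * q x) := div_nonneg (hf0 x) (by positivity)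
    have hc1 : f x / (M * q x) ≤ 1 := (div_le_one (by positivity)).mpr (hfq x)
    have hset : Prod.mk x ⁻¹' (accSet q f M)ᶜ = Set.Ioi (f x / (M * q x)) := by
      ext u
      simp only [Set.mem_preimage, Set.mem_compl_iff, accSet, Set.mem_setOf_eq,
        Set.mem_Ioi, not_and_or, not_le, ne_eq, not_not]
      constructor
      · rintro (h | h)
        · exact absurd h hqx
        · exact h
      · intro h; right; exact h
    rw [hset, Measure.restrict_apply measurableSet_Ioi]
    have : Set.Ioi (f x / (M * q x)) ∩ Set.Icc (0:ℝ) 1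
        = Set.Ioc (f x / (M * q x)) 1 := by
      ext u
      simp only [Set.mem_inter_iff, Set.mem_Ioi, Set.mem_Icc, Set.mem_Ioc]
      exact ⟨fun ⟨h1, _, h3⟩ => ⟨h1, h3⟩, fun ⟨h1, h2⟩ => ⟨h1, (hc0.trans h1.le), h2⟩⟩
    rw [this, Real.volume_Ioc]

end SingleTrial

section Mu

set_option linter.unusedSectionVars false

variable {𝕏 : Type*} [MeasurableSpace 𝕏] {lam : Measure 𝕏} [SigmaFinite lam]
  {q f : 𝕏 → ℝ} {M : ℝ}

lemma f_zero_of_q_zero (hM : 0 < M) (hf0 : ∀ x, 0 ≤ f x) (hfq : ∀ x, f x ≤ M * q x)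
    {x : 𝕏} (hqx : q x = 0) : f x = 0 :=
  le_antisymm (by simpa [hqx] using hfq x) (hf0 x)

lemma prod_acc (hqm : Measurable q) (hfm : Measurable f)
    (hq0 : ∀ x, 0 ≤ q x) (hq1 : ∫ x, q x ∂lam = 1) (hM : 0 < M)
    (hf0 : ∀ x, 0 ≤ f x) (hfq : ∀ x, f x ≤ M * q x) :
    ((lam.withDensity fun x => ENNReal.ofReal (q x)).prod
        (volume.restrict (Set.Icc (0:ℝ) 1))) (accSet q f M)
      = ENNReal.ofReal ((∫ x, f x ∂lam) / M) := by
  have hqi : Integrable q lam := by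
    by_contra h
    rw [integral_undef h] at hq1
    norm_num at hq1
  have hfi : Integrable f lam := by
    refine (hqi.const_mul M).mono' hfm.aestronglyMeasurable ?_
    filter_upwards with x
    rw [Real.norm_eq_abs, abs_of_nonneg (hf0 x)]
    exact hfq x
  have hAcc := measurableSet_accSet_s6 (M := M) hqm hfm
  rw [Measure.prod_apply hAcc]
  rw [lintegral_congr (slice_acc hq0 hM hf0 hfq)]
  have hcm : Measurable fun x => ENNReal.ofReal (f x / (M * q x)) :=
    (hfm.div (measurable_const.mul hqm)).ennreal_ofReal
  rw [lintegral_withDensity_eq_lintegral_mul lam hqm.ennreal_ofReal hcm]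
  have hpt : ∀ x, ((fun x => ENNReal.ofReal (q x)) *
        fun x => ENNReal.ofReal (f x / (M * q x))) x
      = ENNReal.ofReal (f x / M) := by
    intro x
    simp only [Pi.mul_apply]
    by_cases hqx : q x = 0
    · simp [hqx, f_zero_of_q_zero hM hf0 hfq hqx]
    · rw [← ENNReal.ofReal_mul (hq0 x)]
      congr 1
      field_simp
  rw [lintegral_congr hpt]
  rw [← ofReal_integral_eq_lintegral_ofReal (hfi.div_const M)
    (Filter.Eventually.of_forall fun x => div_nonneg (hf0 x) hM.le)]
  rw [integral_div]

lemma prod_rej (hqm : Measurable q) (hfm : Measurable f)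
    (hq0 : ∀ x, 0 ≤ q x) (hM : 0 < M)
    (hf0 : ∀ x, 0 ≤ f x) (hfq : ∀ x, f x ≤ M * q x)
    {A : Set 𝕏} (hA : MeasurableSet A) :
    ((lam.withDensity fun x => ENNReal.ofReal (q x)).prod
        (volume.restrict (Set.Icc (0:ℝ) 1))) ((accSet q f M)ᶜ ∩ Prod.fst ⁻¹' A)
      = (lam.withDensity fun x => ENNReal.ofReal (q x - f x / M)) A := by
  have hAcc := measurableSet_accSet_s6 (M := M) hqm hfm
  have hS : MeasurableSet ((accSet q f M)ᶜ ∩ Prod.fst ⁻¹' A) :=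
    hAcc.compl.inter (measurable_fst hA)
  rw [Measure.prod_apply hS]
  have h1 : ∀ x, (volume.restrict (Set.Icc (0:ℝ) 1))
        (Prod.mk x ⁻¹' ((accSet q f M)ᶜ ∩ Prod.fst ⁻¹' A))
      = A.indicator (fun x => ENNReal.ofReal (1 - f x / (M * q x))) x := by
    intro x
    by_cases hx : x ∈ A
    · have : Prod.mk x ⁻¹' ((accSet q f M)ᶜ ∩ Prod.fst ⁻¹' A)
          = Prod.mk x ⁻¹' (accSet q f M)ᶜ := by
        ext u; simp [hx]
      rw [this, slice_rej hq0 hM hf0 hfq x, Set.indicator_of_mem hx]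
    · have : Prod.mk x ⁻¹' ((accSet q f M)ᶜ ∩ Prod.fst ⁻¹' A) = ∅ := by
        ext u; simp [hx]
      rw [this, Set.indicator_of_notMem hx]
      simp
  rw [lintegral_congr h1]
  have hψm : Measurable (A.indicator fun x => ENNReal.ofReal (1 - f x / (M * q x))) :=
    ((measurable_const.sub (hfm.div (measurable_const.mul hqm))).ennreal_ofReal).indicator hA
  rw [lintegral_withDensity_eq_lintegral_mul lam hqm.ennreal_ofReal hψm]
  have hpt : ∀ x, ((fun x => ENNReal.ofReal (q x)) *
        A.indicator fun x => ENNReal.ofReal (1 - f x / (M * q x))) x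
      = A.indicator (fun x => ENNReal.ofReal (q x - f x / M)) x := by
    intro x
    simp only [Pi.mul_apply]
    by_cases hx : x ∈ A
    · rw [Set.indicator_of_mem hx, Set.indicator_of_mem hx]
      by_cases hqx : q x = 0
      · simp [hqx, f_zero_of_q_zero hM hf0 hfq hqx]
      · rw [← ENNReal.ofReal_mul (hq0 x)]
        congr 1
        field_simp
    · rw [Set.indicator_of_notMem hx, Set.indicator_of_notMem hx, mul_zero]
  rw [lintegral_congr hpt, lintegral_indicator hA, withDensity_apply _ hA]

end Mu


/-- Law of the rejected proposals: for every `r ≥ 0` and measurable `B ⊆ 𝕏^r`,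
`P(T = r+1, (Y_1,…,Y_r) ∈ B) = (Z/M) ∫_B ∏_i (q(y_i) − f(y_i)/M) dλ^⊗r`. -/
theorem rejected_proposals_law
    {𝕏 : Type*} [MeasurableSpace 𝕏] (lam : Measure 𝕏) [SigmaFinite lam]
    (q f : 𝕏 → ℝ) (hqm : Measurable q) (hfm : Measurable f)
    (hq0 : ∀ x, 0 ≤ q x) (hq1 : ∫ x, q x ∂lam = 1)
    (M : ℝ) (hM : 0 < M)
    (hf0 : ∀ x, 0 ≤ f x) (hfq : ∀ x, f x ≤ M * q x)
    (Z : ℝ) (hZ : Z = ∫ x, f x ∂lam) (hZpos : 0 < Z)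
    {Ω : Type*} [MeasurableSpace Ω] (P : Measure Ω) [IsProbabilityMeasure P]
    (Y : ℕ → Ω → 𝕏) (U : ℕ → Ω → ℝ)
    (hY : ∀ i, Measurable (Y i)) (hU : ∀ i, Measurable (U i))
    (hindep : iIndepFun (fun i ω => (Y i ω, U i ω)) P)
    (hident : ∀ i, IdentDistrib (fun ω => (Y i ω, U i ω)) (fun ω => (Y 0 ω, U 0 ω)) P P)
    (hYlaw : ∀ i, P.map (Y i) = lam.withDensity fun x => ENNReal.ofReal (q x))
    (hUlaw : ∀ i, P.map (U i) = volume.restrict (Set.Icc (0:ℝ) 1))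
    (hYU : ∀ i, IndepFun (Y i) (U i) P)
    (r : ℕ) (B : Set (Fin r → 𝕏)) (hB : MeasurableSet B) :
    P {ω | (∀ i < r, ¬ accepts q f M Y U i ω) ∧ accepts q f M Y U r ω ∧
        (fun j : Fin r => Y j ω) ∈ B}
      = ENNReal.ofReal ((Z / M) *
          ∫ y in B, ∏ i : Fin r, (q (y i) - f (y i) / M)
            ∂(Measure.pi fun _ : Fin r => lam)) := by
  classical
  -- notation
  set X : ℕ → Ω → 𝕏 × ℝ := fun i ω => (Y i ω, U i ω) with hX
  have hXm : ∀ i, Measurable (X i) := fun i => (hY i).prodMk (hU i)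
  set μ : Measure (𝕏 × ℝ) := P.map (X 0) with hμ
  have hμprob : IsProbabilityMeasure μ := Measure.isProbabilityMeasure_map (hXm 0).aemeasurable
  have hmu : μ = (lam.withDensity fun x => ENNReal.ofReal (q x)).prod
      (volume.restrict (Set.Icc (0:ℝ) 1)) := by
    rw [hμ, (indepFun_iff_map_prod_eq_prod_map_map (hY 0).aemeasurable
      (hU 0).aemeasurable).mp (hYU 0), hYlaw 0, hUlaw 0]
  have hAcc := measurableSet_accSet_s6 (M := M) hqm hfm
  -- rejected-proposal law for a single trial
  set g : 𝕏 → ENNReal := fun x => ENNReal.ofReal (q x - f x / M) with hg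
  have hgm : Measurable g := (hqm.sub (hfm.div_const M)).ennreal_ofReal
  set ν : Measure 𝕏 := lam.withDensity g with hν
  have hrej : ∀ (A : Set 𝕏), MeasurableSet A → μ ((accSet q f M)ᶜ ∩ Prod.fst ⁻¹' A) = ν A := by
    intro A hA
    rw [hmu]
    exact prod_rej hqm hfm hq0 hM hf0 hfq hA
  have hacc : μ (accSet q f M) = ENNReal.ofReal (Z / M) := by
    rw [hmu, prod_acc hqm hfm hq0 hq1 hM hf0 hfq, ← hZ]
  haveI hν_fin : IsFiniteMeasure ν := by
    constructor
    rw [← hrej Set.univ MeasurableSet.univ]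
    exact lt_of_le_of_lt (measure_mono (Set.subset_univ _)) (measure_lt_top μ _)
  haveI hν_sf : SigmaFinite ν := hν_fin.toSigmaFinite
  -- the event as a preimage
  set V : Ω → Fin (r+1) → 𝕏 × ℝ := fun ω i => X i ω with hV
  have hVm : Measurable V := measurable_pi_lambda _ fun i => hXm i
  set proj : (Fin r → 𝕏 × ℝ) → (Fin r → 𝕏) := fun w j => (w j).1 with hproj
  have hprojm : Measurable proj :=
    measurable_pi_lambda _ fun j => measurable_fst.comp (measurable_pi_apply j)
  set T2 : Set (Fin r → 𝕏 × ℝ) :=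
    (Set.pi Set.univ fun _ => (accSet q f M)ᶜ) ∩ proj ⁻¹' B with hT2
  have hT2m : MeasurableSet T2 :=
    (MeasurableSet.univ_pi fun _ => hAcc.compl).inter (hprojm hB)
  set e := MeasurableEquiv.piFinSuccAbove (fun _ : Fin (r+1) => 𝕏 × ℝ) (Fin.last r) with he
  set S : Set (Fin (r+1) → 𝕏 × ℝ) := e ⁻¹' ((accSet q f M) ×ˢ T2) with hS
  have hSm : MeasurableSet S := e.measurable (hAcc.prod hT2m)
  have hev : {ω | (∀ i < r, ¬ accepts q f M Y U i ω) ∧ accepts q f M Y U r ω ∧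
        (fun j : Fin r => Y j ω) ∈ B} = V ⁻¹' S := by
    ext ω
    have heapp : e (V ω) = (V ω (Fin.last r), fun j => V ω ((Fin.last r).succAbove j)) := rfl
    simp only [Set.mem_setOf_eq, Set.mem_preimage, hS, heapp, Set.mem_prod, hT2,
      Set.mem_inter_iff, Set.mem_univ_pi, Set.mem_compl_iff, Fin.succAbove_last]
    constructor
    · rintro ⟨h1, h2, h3⟩
      refine ⟨h2, fun i => ?_, ?_⟩
      · have := h1 i i.isLt
        simpa [accepts, accSet, hV, hX] using this
      · have : (fun j : Fin r => (V ω j.castSucc).1) = fun j : Fin r => Y j ω := by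
          funext j
          simp [hV, hX]
        rw [hproj]
        simpa [this] using h3
    · rintro ⟨h2, h1, h3⟩
      refine ⟨fun i hi => ?_, ?_, ?_⟩
      · have := h1 ⟨i, hi⟩
        simpa [accepts, accSet, hV, hX] using this
      · simpa [accepts, accSet, hV, hX, Fin.val_last] using h2
      · have : (fun j : Fin r => (V ω j.castSucc).1) = fun j : Fin r => Y j ω := by
          funext j
          simp [hV, hX]
        rw [hproj] at h3
        simpa [this] using h3
  rw [hev, ← Measure.map_apply hVm hSm,
    joint_law_pi P X hXm hindep hident (r+1)]
  -- split off the last coordinate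
  have hmp := measurePreserving_piFinSuccAbove (fun _ : Fin (r+1) => μ) (Fin.last r)
  rw [hS, ← MeasurableEquiv.map_apply e, hmp.map_eq, Measure.prod_prod, hacc]
  -- compute the measure of T2
  have hT2val : (Measure.pi fun _ : Fin r => μ) T2 = (Measure.pi fun _ : Fin r => ν) B := by
    have hmap : ((Measure.pi fun _ : Fin r => μ).restrict
          (Set.pi Set.univ fun _ => (accSet q f M)ᶜ)).map proj
        = Measure.pi fun _ : Fin r => ν := by
      refine (Measure.pi_eq fun t ht => ?_).symm
      rw [Measure.map_apply hprojm (MeasurableSet.univ_pi ht),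
        Measure.restrict_apply (hprojm (MeasurableSet.univ_pi ht))]
      have : proj ⁻¹' Set.pi Set.univ t ∩ (Set.pi Set.univ fun _ => (accSet q f M)ᶜ)
          = Set.pi Set.univ fun i => (accSet q f M)ᶜ ∩ Prod.fst ⁻¹' t i := by
        ext w
        simp only [Set.mem_inter_iff, Set.mem_preimage, Set.mem_univ_pi, hproj,
          Set.mem_compl_iff]
        exact ⟨fun h i => ⟨h.2 i, h.1 i⟩, fun h => ⟨fun i => (h i).2, fun i => (h i).1⟩⟩
      rw [this, Measure.pi_pi]
      exact Finset.prod_congr rfl fun i _ => hrej (t i) (ht i)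
    rw [← hmap, Measure.map_apply hprojm hB,
      Measure.restrict_apply (hprojm hB), hT2, Set.inter_comm]
  rw [hT2val]
  -- identify the product of rejection laws as a density
  rw [hν, pi_withDensity_const lam r g hgm, withDensity_apply _ hB]
  -- compute the real integral as a lintegral
  set G : (Fin r → 𝕏) → ℝ := fun y => ∏ i : Fin r, (q (y i) - f (y i) / M) with hG
  have hG0 : ∀ y, 0 ≤ G y := fun y => Finset.prod_nonneg fun i _ =>
    sub_nonneg.mpr ((div_le_iff₀ hM).mpr (by linarith [hfq (y i)] ))
  have hGm : Measurable G := Finset.measurable_prod _ fun i _ =>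
    ((hqm.sub (hfm.div_const M)).comp (measurable_pi_apply i))
  have hGl : ∀ y, ENNReal.ofReal (G y) = ∏ i : Fin r, g (y i) := by
    intro y
    rw [hG, hg, ENNReal.ofReal_prod_of_nonneg fun i _ =>
      sub_nonneg.mpr ((div_le_iff₀ hM).mpr (by linarith [hfq (y i)]))]
  have hIG : ∫ y in B, G y ∂(Measure.pi fun _ : Fin r => lam)
      = (∫⁻ y in B, ∏ i : Fin r, g (y i) ∂(Measure.pi fun _ : Fin r => lam)).toReal := by
    rw [integral_eq_lintegral_of_nonneg_ae (Filter.Eventually.of_forall hG0)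
      hGm.aestronglyMeasurable]
    congr 1
    exact lintegral_congr fun y => hGl y
  have hLfin : (∫⁻ y in B, ∏ i : Fin r, g (y i) ∂(Measure.pi fun _ : Fin r => lam)) ≠ ⊤ := by
    rw [← withDensity_apply _ hB, ← pi_withDensity_const lam r g hgm]
    refine ne_of_lt (lt_of_le_of_lt (measure_mono (Set.subset_univ _)) ?_)
    rw [Measure.pi_univ]
    exact ENNReal.prod_lt_top fun i _ => measure_lt_top ν _
  rw [hIG, ENNReal.ofReal_mul (div_nonneg hZpos.le hM.le),
    ENNReal.ofReal_toReal hLfin]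
end

section
/- Lower bound on the augmented posterior density (the key inequality in the proof of Theorem 1): for every θ ∈ Θ and every configuration of rejected proposals 𝒴 = (𝒴_1,…,𝒴_n) with sizes r_1,…,r_n, the augmented posterior density satisfies p(θ ∣ X, 𝒴) ≥ p(θ ∣ X) · (b_f/B_f)^n · β^{r_1+⋯+r_n}. -/
open MeasureTheory ProbabilityTheory

/-- The normalizing constant `Z(θ) = ∫_𝕏 f(x,θ) λ(dx)`. -/
noncomputable def Zconst {𝕏 Θ : Type*} [MeasurableSpace 𝕏]
    (lam : Measure 𝕏) (f : 𝕏 → Θ → ℝ) (θ : Θ) : ℝ :=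
  ∫ x, f x θ ∂lam

/-- The posterior density `p(θ ∣ X)` with respect to `μ`. -/
noncomputable def postDensity {𝕏 Θ : Type*} [MeasurableSpace 𝕏] [MeasurableSpace Θ]
    (lam : Measure 𝕏) (mu : Measure Θ) (p0 : Θ → ℝ) (f : 𝕏 → Θ → ℝ)
    {n : ℕ} (X : Fin n → 𝕏) (θ : Θ) : ℝ :=
  (p0 θ * ∏ i, f (X i) θ / Zconst lam f θ) /
    ∫ θ', p0 θ' * ∏ i, f (X i) θ' / Zconst lam f θ' ∂mu

/-- The unnormalized augmented posterior density over `θ` given the observations and a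
configuration of rejected proposals. -/
noncomputable def augNum {𝕏 Θ : Type*}
    (p0 : Θ → ℝ) (f q : 𝕏 → Θ → ℝ) (M : ℝ)
    {n : ℕ} (X : Fin n → 𝕏) (r : Fin n → ℕ)
    (Y : (i : Fin n) → Fin (r i) → 𝕏) (θ : Θ) : ℝ :=
  p0 θ * ∏ i, (f (X i) θ * ∏ j, (q (Y i j) θ - f (Y i j) θ / M))

/-- The augmented posterior density `p(θ ∣ X, 𝒴)` with respect to `μ`. -/
noncomputable def augPostDensity {𝕏 Θ : Type*} [MeasurableSpace 𝕏] [MeasurableSpace Θ]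
    (lam : Measure 𝕏) (mu : Measure Θ) (p0 : Θ → ℝ) (f q : 𝕏 → Θ → ℝ) (M : ℝ)
    {n : ℕ} (X : Fin n → 𝕏) (r : Fin n → ℕ)
    (Y : (i : Fin n) → Fin (r i) → 𝕏) (θ : Θ) : ℝ :=
  augNum p0 f q M X r Y θ / ∫ θ', augNum p0 f q M X r Y θ' ∂mu

/-- The conditional density `p(𝒴_i ∣ θ)` of a block of rejected proposals with respect
to `λ^⊗r`. -/
noncomputable def condYDensity {𝕏 Θ : Type*} [MeasurableSpace 𝕏]
    (lam : Measure 𝕏) (f q : 𝕏 → Θ → ℝ) (M : ℝ)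
    {r : ℕ} (y : Fin r → 𝕏) (θ : Θ) : ℝ :=
  (Zconst lam f θ / M) * ∏ j, (q (y j) θ - f (y j) θ / M)

/-- The Markov transition density `k(θ̂ ∣ θ)` of the data-augmentation sampler:
sum over the numbers of rejected proposals, integral over their locations, of the
augmented posterior density times the conditional density of the rejected proposals. -/
noncomputable def transDensity {𝕏 Θ : Type*} [MeasurableSpace 𝕏] [MeasurableSpace Θ]
    (lam : Measure 𝕏) [SigmaFinite lam] (mu : Measure Θ)
    (p0 : Θ → ℝ) (f q : 𝕏 → Θ → ℝ) (M : ℝ)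
    {n : ℕ} (X : Fin n → 𝕏) (θhat θ : Θ) : ℝ :=
  ∑' r : Fin n → ℕ,
    ∫ Y : (i : Fin n) → Fin (r i) → 𝕏,
      augPostDensity lam mu p0 f q M X r Y θhat *
        ∏ i, condYDensity lam f q M (Y i) θ
      ∂(Measure.pi fun i => Measure.pi fun _ : Fin (r i) => lam)

/-- Lower bound on the augmented posterior density (key inequality for Theorem 1):
`p(θ ∣ X, 𝒴) ≥ p(θ ∣ X) (b_f/B_f)^n β^(r_1+⋯+r_n)` with `β = b_q r / B_q`. -/
theorem augmented_posterior_lower_bound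
    {𝕏 Θ : Type*} [MeasurableSpace 𝕏] [MeasurableSpace Θ]
    (lam : Measure 𝕏) [IsFiniteMeasure lam] (mu : Measure Θ) [SigmaFinite mu]
    (p0 : Θ → ℝ) (hp0m : Measurable p0) (hp00 : ∀ θ, 0 ≤ p0 θ)
    (hp01 : ∫ θ, p0 θ ∂mu = 1)
    (f q : 𝕏 → Θ → ℝ)
    (hfm : Measurable (Function.uncurry f)) (hqm : Measurable (Function.uncurry q))
    (hq1 : ∀ θ, ∫ x, q x θ ∂lam = 1)
    (M bf Bf bq Bq : ℝ) (hM : 0 < M) (hbf : 0 < bf) (hbq : 0 < bq)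
    (hfb : ∀ x θ, bf ≤ f x θ ∧ f x θ ≤ Bf)
    (hqb : ∀ x θ, bq ≤ q x θ ∧ q x θ ≤ Bq)
    (hfq : ∀ x θ, f x θ ≤ M * q x θ)
    {n : ℕ} (X : Fin n → 𝕏)
    (rc : ℝ) (hrc : rc = ⨅ p : 𝕏 × Θ, (1 - f p.1 p.2 / (M * q p.1 p.2)))
    (hrcpos : 0 < rc)
    (θ : Θ) (r : Fin n → ℕ) (Y : (i : Fin n) → Fin (r i) → 𝕏) :
    augPostDensity lam mu p0 f q M X r Y θ
      ≥ postDensity lam mu p0 f X θ * (bf / Bf) ^ n *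
          (bq * rc / Bq) ^ (∑ i, r i) := by
  classical
  -- basic positivity facts
  have hfpos : ∀ x θ', 0 < f x θ' := fun x θ' => lt_of_lt_of_le hbf (hfb x θ').1
  have hqpos : ∀ x θ', 0 < q x θ' := fun x θ' => lt_of_lt_of_le hbq (hqb x θ').1
  have hfac0 : ∀ y θ', 0 ≤ q y θ' - f y θ' / M := by
    intro y θ'
    have : f y θ' / M ≤ q y θ' := by
      rw [div_le_iff₀ hM]; rw [mul_comm]; exact hfq y θ'
    linarith
  have hNnonneg : ∀ θ', 0 ≤ augNum p0 f q M X r Y θ' := by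
    intro θ'
    refine mul_nonneg (hp00 θ') (Finset.prod_nonneg fun i _ => ?_)
    exact mul_nonneg (hfpos _ _).le (Finset.prod_nonneg fun j _ => hfac0 _ _)
  -- trivial case n = 0
  rcases Nat.eq_zero_or_pos n with hn | hn
  · subst hn
    simp [augPostDensity, postDensity, augNum]
  -- degenerate case lam = 0
  set κ : ℝ := (lam Set.univ).toReal with hκdef
  rcases eq_or_lt_of_le (ENNReal.toReal_nonneg : (0:ℝ) ≤ κ) with hκ | hκ
  · have hlam0 : lam = 0 := by
      apply Measure.measure_univ_eq_zero.mp
      have : (lam Set.univ).toReal = 0 := hκ.symm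
      exact (ENNReal.toReal_eq_zero_iff _).mp this |>.resolve_right
        (measure_ne_top lam Set.univ)
    have hZ0 : Zconst lam f θ = 0 := by simp [Zconst, hlam0]
    have hpost0 : postDensity lam mu p0 f X θ = 0 := by
      have : (∏ i, f (X i) θ / Zconst lam f θ) = 0 := by
        apply Finset.prod_eq_zero (Finset.mem_univ (⟨0, hn⟩ : Fin n))
        simp [hZ0]
      simp [postDensity, this]
    rw [hpost0]
    simp only [zero_mul]
    exact div_nonneg (hNnonneg θ) (integral_nonneg hNnonneg)
  -- main case: κ > 0
  have hX : Nonempty 𝕏 := ⟨X ⟨0, hn⟩⟩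
  obtain ⟨x₀⟩ := hX
  have hBf : 0 < Bf := lt_of_lt_of_le hbf ((hfb x₀ θ).1.trans (hfb x₀ θ).2)
  have hBq : 0 < Bq := lt_of_lt_of_le hbq ((hqb x₀ θ).1.trans (hqb x₀ θ).2)
  -- the infimum bound : rc ≤ 1 - f/(Mq)
  have hbdd : BddBelow (Set.range fun p : 𝕏 × Θ => 1 - f p.1 p.2 / (M * q p.1 p.2)) := by
    refine ⟨1 - Bf / (M * bq), ?_⟩
    rintro _ ⟨p, rfl⟩
    have h1 : f p.1 p.2 / (M * q p.1 p.2) ≤ Bf / (M * bq) := by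
      apply div_le_div₀ hBf.le (hfb _ _).2 (mul_pos hM hbq)
      exact mul_le_mul_of_nonneg_left (hqb _ _).1 hM.le
    linarith
  have hrcle : ∀ y θ', rc ≤ 1 - f y θ' / (M * q y θ') := by
    intro y θ'
    rw [hrc]
    exact ciInf_le hbdd (y, θ')
  -- bounds on each rejected-proposal factor
  have hfacLB : ∀ y θ', bq * rc ≤ q y θ' - f y θ' / M := by
    intro y θ'
    have hq0 : (0:ℝ) < q y θ' := hqpos y θ'
    have h1 : q y θ' * rc ≤ q y θ' * (1 - f y θ' / (M * q y θ')) :=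
      mul_le_mul_of_nonneg_left (hrcle y θ') hq0.le
    have h2 : q y θ' * (1 - f y θ' / (M * q y θ')) = q y θ' - f y θ' / M := by
      field_simp
    have h3 : bq * rc ≤ q y θ' * rc :=
      mul_le_mul_of_nonneg_right (hqb y θ').1 hrcpos.le
    linarith
  have hfacUB : ∀ y θ', q y θ' - f y θ' / M ≤ Bq := by
    intro y θ'
    have : (0:ℝ) ≤ f y θ' / M := div_nonneg (hfpos y θ').le hM.le
    linarith [(hqb y θ').2]
  -- bounds on Z
  have hfθmeas : ∀ x : 𝕏, Measurable fun θ' => f x θ' := fun x =>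
    hfm.comp (measurable_prodMk_left (m := inferInstance))
  have hfxmeas : ∀ θ', Measurable fun x => f x θ' := fun θ' =>
    hfm.comp (measurable_prodMk_right (m := inferInstance))
  have hqθmeas : ∀ x : 𝕏, Measurable fun θ' => q x θ' := fun x =>
    hqm.comp (measurable_prodMk_left (m := inferInstance))
  have hfint : ∀ θ', Integrable (fun x => f x θ') lam := by
    intro θ'
    refine ⟨(hfxmeas θ').aestronglyMeasurable, HasFiniteIntegral.of_bounded
      (C := Bf) (ae_of_all _ fun x => ?_)⟩
    rw [Real.norm_eq_abs, abs_of_nonneg (hfpos x θ').le]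
    exact (hfb x θ').2
  have hZlb : ∀ θ', bf * κ ≤ Zconst lam f θ' := by
    intro θ'
    have : ∫ _ : 𝕏, bf ∂lam ≤ ∫ x, f x θ' ∂lam :=
      integral_mono (integrable_const bf) (hfint θ') fun x => (hfb x θ').1
    rwa [integral_const, smul_eq_mul, mul_comm] at this
  have hZub : ∀ θ', Zconst lam f θ' ≤ Bf * κ := by
    intro θ'
    have : ∫ x, f x θ' ∂lam ≤ ∫ _ : 𝕏, Bf ∂lam :=
      integral_mono (hfint θ') (integrable_const Bf) fun x => (hfb x θ').2
    rwa [integral_const, smul_eq_mul, mul_comm] at this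
  have hZpos : ∀ θ', 0 < Zconst lam f θ' := fun θ' =>
    lt_of_lt_of_le (mul_pos hbf hκ) (hZlb θ')
  -- names for the two unnormalized densities
  set G : Θ → ℝ := fun θ' => p0 θ' * ∏ i, f (X i) θ' / Zconst lam f θ' with hGdef
  set N : Θ → ℝ := fun θ' => augNum p0 f q M X r Y θ' with hNdef
  set S : ℕ := ∑ i, r i with hSdef
  set c1 : ℝ := (bf * κ) ^ n * (bq * rc) ^ S with hc1def
  set c2 : ℝ := (Bf * κ) ^ n * Bq ^ S with hc2def
  have hc1pos : 0 < c1 := mul_pos (pow_pos (mul_pos hbf hκ) n)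
    (pow_pos (mul_pos hbq hrcpos) S)
  have hc2pos : 0 < c2 := mul_pos (pow_pos (mul_pos hBf hκ) n) (pow_pos hBq S)
  -- key factorization : N = G * ∏ i, (Z * ∏ j factor)
  have hNeq : ∀ θ', N θ' =
      G θ' * ∏ i, (Zconst lam f θ' * ∏ j, (q (Y i j) θ' - f (Y i j) θ' / M)) := by
    intro θ'
    have hZ : Zconst lam f θ' ≠ 0 := (hZpos θ').ne'
    simp only [hNdef, hGdef, augNum]
    rw [mul_assoc, ← Finset.prod_mul_distrib]
    congr 1
    refine Finset.prod_congr rfl fun i _ => ?_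
    rw [div_mul_eq_mul_div, eq_div_iff hZ]
    ring
  -- bounds on the correction product
  have hprodLB : ∀ θ', (bf * κ) ^ n * (bq * rc) ^ S ≤
      ∏ i, (Zconst lam f θ' * ∏ j, (q (Y i j) θ' - f (Y i j) θ' / M)) := by
    intro θ'
    have heq : (bf * κ) ^ n * (bq * rc) ^ S =
        ∏ i : Fin n, ((bf * κ) * (bq * rc) ^ (r i)) := by
      rw [Finset.prod_mul_distrib, Finset.prod_const, Finset.card_univ,
        Fintype.card_fin, Finset.prod_pow_eq_pow_sum]
    rw [heq]
    refine Finset.prod_le_prod (fun i _ => ?_) (fun i _ => ?_)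
    · exact mul_nonneg (mul_pos hbf hκ).le (pow_pos (mul_pos hbq hrcpos) _).le
    · refine mul_le_mul (hZlb θ') ?_ (pow_pos (mul_pos hbq hrcpos) _).le
        (hZpos θ').le
      calc (bq * rc) ^ (r i) = ∏ _j : Fin (r i), (bq * rc) := by
            rw [Finset.prod_const, Finset.card_univ, Fintype.card_fin]
        _ ≤ ∏ j, (q (Y i j) θ' - f (Y i j) θ' / M) :=
            Finset.prod_le_prod (fun j _ => (mul_pos hbq hrcpos).le)
              (fun j _ => hfacLB _ _)
  have hprodUB : ∀ θ',
      (∏ i, (Zconst lam f θ' * ∏ j, (q (Y i j) θ' - f (Y i j) θ' / M))) ≤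
        (Bf * κ) ^ n * Bq ^ S := by
    intro θ'
    have heq : (Bf * κ) ^ n * Bq ^ S = ∏ i : Fin n, ((Bf * κ) * Bq ^ (r i)) := by
      rw [Finset.prod_mul_distrib, Finset.prod_const, Finset.card_univ,
        Fintype.card_fin, Finset.prod_pow_eq_pow_sum]
    rw [heq]
    refine Finset.prod_le_prod (fun i _ => ?_) (fun i _ => ?_)
    · exact mul_nonneg (hZpos θ').le (Finset.prod_nonneg fun j _ => hfac0 _ _)
    · refine mul_le_mul (hZub θ') ?_
        (Finset.prod_nonneg fun j _ => hfac0 _ _) (mul_pos hBf hκ).le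
      calc (∏ j, (q (Y i j) θ' - f (Y i j) θ' / M))
          ≤ ∏ _j : Fin (r i), Bq :=
            Finset.prod_le_prod (fun j _ => hfac0 _ _) (fun j _ => hfacUB _ _)
        _ = Bq ^ (r i) := by rw [Finset.prod_const, Finset.card_univ, Fintype.card_fin]
  -- nonnegativity and bounds for G
  have hGnonneg : ∀ θ', 0 ≤ G θ' := by
    intro θ'
    exact mul_nonneg (hp00 θ') (Finset.prod_nonneg fun i _ =>
      div_nonneg (hfpos _ _).le (hZpos θ').le)
  have hGub : ∀ θ', G θ' ≤ (Bf / (bf * κ)) ^ n * p0 θ' := by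
    intro θ'
    have h1 : (∏ i, f (X i) θ' / Zconst lam f θ') ≤ (Bf / (bf * κ)) ^ n := by
      calc (∏ i, f (X i) θ' / Zconst lam f θ')
          ≤ ∏ _i : Fin n, (Bf / (bf * κ)) :=
            Finset.prod_le_prod (fun i _ => div_nonneg (hfpos _ _).le (hZpos θ').le)
              (fun i _ => div_le_div₀ hBf.le (hfb _ _).2 (mul_pos hbf hκ) (hZlb θ'))
        _ = (Bf / (bf * κ)) ^ n := by
            rw [Finset.prod_const, Finset.card_univ, Fintype.card_fin]
    calc G θ' ≤ p0 θ' * (Bf / (bf * κ)) ^ n :=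
          mul_le_mul_of_nonneg_left h1 (hp00 θ')
      _ = (Bf / (bf * κ)) ^ n * p0 θ' := mul_comm _ _
  have hGlb : ∀ θ', (bf / (Bf * κ)) ^ n * p0 θ' ≤ G θ' := by
    intro θ'
    have h1 : (bf / (Bf * κ)) ^ n ≤ ∏ i, f (X i) θ' / Zconst lam f θ' := by
      calc (bf / (Bf * κ)) ^ n = ∏ _i : Fin n, (bf / (Bf * κ)) := by
            rw [Finset.prod_const, Finset.card_univ, Fintype.card_fin]
        _ ≤ ∏ i, f (X i) θ' / Zconst lam f θ' :=
            Finset.prod_le_prod (fun i _ => (div_pos hbf (mul_pos hBf hκ)).le)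
              (fun i _ => div_le_div₀ (hfpos _ _).le (hfb _ _).1
                (hZpos θ') (hZub θ'))
    calc (bf / (Bf * κ)) ^ n * p0 θ' = p0 θ' * (bf / (Bf * κ)) ^ n := mul_comm _ _
      _ ≤ G θ' := mul_le_mul_of_nonneg_left h1 (hp00 θ')
  -- measurability
  have hZmeas : Measurable fun θ' => Zconst lam f θ' :=
    (hfm.stronglyMeasurable.integral_prod_left' (μ := lam)).measurable
  have hGmeas : Measurable G :=
    hp0m.mul (Finset.measurable_prod _ fun i _ => (hfθmeas (X i)).div hZmeas)
  have hNmeas : Measurable N := by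
    refine hp0m.mul (Finset.measurable_prod _ fun i _ => ?_)
    exact (hfθmeas (X i)).mul (Finset.measurable_prod _ fun j _ =>
      (hqθmeas _).sub ((hfθmeas _).div_const M))
  -- integrability
  have hp0int : Integrable p0 mu := integrable_of_integral_eq_one hp01
  have hGint : Integrable G mu := by
    refine (hp0int.const_mul ((Bf / (bf * κ)) ^ n)).mono'
      hGmeas.aestronglyMeasurable (ae_of_all _ fun θ' => ?_)
    rw [Real.norm_eq_abs, abs_of_nonneg (hGnonneg θ')]
    exact hGub θ'
  -- pointwise bounds on N
  have hNLB : ∀ θ', c1 * G θ' ≤ N θ' := by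
    intro θ'
    rw [hNeq θ']
    calc c1 * G θ' = G θ' * c1 := mul_comm _ _
      _ ≤ G θ' * ∏ i, (Zconst lam f θ' * ∏ j, (q (Y i j) θ' - f (Y i j) θ' / M)) :=
          mul_le_mul_of_nonneg_left (hprodLB θ') (hGnonneg θ')
  have hNUB : ∀ θ', N θ' ≤ c2 * G θ' := by
    intro θ'
    rw [hNeq θ']
    calc G θ' * ∏ i, (Zconst lam f θ' * ∏ j, (q (Y i j) θ' - f (Y i j) θ' / M))
        ≤ G θ' * c2 := mul_le_mul_of_nonneg_left (hprodUB θ') (hGnonneg θ')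
      _ = c2 * G θ' := mul_comm _ _
  have hNint : Integrable N mu := by
    refine (hGint.const_mul c2).mono' hNmeas.aestronglyMeasurable
      (ae_of_all _ fun θ' => ?_)
    rw [Real.norm_eq_abs, abs_of_nonneg (hNnonneg θ')]
    exact hNUB θ'
  -- positivity of ∫ G
  have hGintpos : 0 < ∫ θ', G θ' ∂mu := by
    have h1 : (bf / (Bf * κ)) ^ n * 1 ≤ ∫ θ', G θ' ∂mu := by
      rw [← hp01, ← integral_const_mul]
      exact integral_mono (hp0int.const_mul _) hGint hGlb
    have h2 : (0:ℝ) < (bf / (Bf * κ)) ^ n := pow_pos (div_pos hbf (mul_pos hBf hκ)) n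
    linarith
  -- integral bounds
  have hIntNlb : c1 * ∫ θ', G θ' ∂mu ≤ ∫ θ', N θ' ∂mu := by
    rw [← integral_const_mul]
    exact integral_mono (hGint.const_mul c1) hNint hNLB
  have hIntNub : (∫ θ', N θ' ∂mu) ≤ c2 * ∫ θ', G θ' ∂mu := by
    rw [← integral_const_mul]
    exact integral_mono hNint (hGint.const_mul c2) hNUB
  have hIntNpos : 0 < ∫ θ', N θ' ∂mu :=
    lt_of_lt_of_le (mul_pos hc1pos hGintpos) hIntNlb
  -- final ratio comparison
  have hgoal : (c1 * G θ) / (c2 * ∫ θ', G θ' ∂mu) ≤ N θ / ∫ θ', N θ' ∂mu :=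
    div_le_div₀ (hNnonneg θ) (hNLB θ) hIntNpos hIntNub
  have hratio : (bf / Bf) ^ n * (bq * rc / Bq) ^ S = c1 / c2 := by
    rw [hc1def, hc2def, div_pow, div_pow, mul_pow, mul_pow]
    rw [div_mul_div_comm]
    rw [eq_div_iff (by positivity)]
    field_simp
    ring
  have hrhs : postDensity lam mu p0 f X θ * (bf / Bf) ^ n * (bq * rc / Bq) ^ S =
      (c1 * G θ) / (c2 * ∫ θ', G θ' ∂mu) := by
    have hpd : postDensity lam mu p0 f X θ = G θ / ∫ θ', G θ' ∂mu := rfl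
    rw [hpd, mul_assoc, hratio, div_mul_div_comm]
    ring
  have hlhs : augPostDensity lam mu p0 f q M X r Y θ = N θ / ∫ θ', N θ' ∂mu := rfl
  rw [ge_iff_le, hrhs, hlhs]
  exact hgoal
end
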